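/- arXiv:2010.02325 — 13 statements merged into one kernel-verified Lean document; each statement's English description precedes it below -/
import Mathlib

section
/- Every Δ_ℓ* subset of ℕ is syndetic: if D ⊆ ℕ has the property that for every strictly increasing sequence (n_k) in ℕ there exist indices k₁ < k₂ < ... < k_{2^ℓ} with ∂(n_{k₁},...,n_{k_{2^ℓ}}) ∈ D, then there exists N such that every interval of N consecutive positive integers meets D. -/
/-- The iterated difference map: `del ℓ f` is `∂(f 0, ..., f (2^ℓ - 1))`. -/
def del : ℕ → (ℕ → ℤ) → ℤ
  | 0, f => f 0
  | (ℓ + 1), f => del ℓ (fun i => f (2 ^ ℓ + i)) - del ℓ f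

lemma del_abs_le (ℓ : ℕ) (f : ℕ → ℤ) :
    |del ℓ f| ≤ ∑ i ∈ Finset.range (2 ^ ℓ), |f i| := by
  induction ℓ generalizing f with
  | zero => simp [del]
  | succ ℓ ih =>
    have h : (2:ℕ) ^ (ℓ+1) = 2 ^ ℓ + 2 ^ ℓ := by ring
    rw [del, h, Finset.sum_range_add]
    calc |del ℓ (fun i => f (2 ^ ℓ + i)) - del ℓ f|
        ≤ |del ℓ (fun i => f (2 ^ ℓ + i))| + |del ℓ f| := abs_sub _ _
      _ ≤ (∑ i ∈ Finset.range (2 ^ ℓ), |f (2 ^ ℓ + i)|)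
          + ∑ i ∈ Finset.range (2 ^ ℓ), |f i| := add_le_add (ih _) (ih _)
      _ = _ := add_comm _ _

lemma del_sub_le (ℓ : ℕ) (f : ℕ → ℤ) :
    |del ℓ f - f (2 ^ ℓ - 1)| ≤ ∑ i ∈ Finset.range (2 ^ ℓ - 1), |f i| := by
  induction ℓ generalizing f with
  | zero => simp [del]
  | succ ℓ ih =>
    have h1 : (2:ℕ) ^ (ℓ+1) - 1 = 2 ^ ℓ + (2 ^ ℓ - 1) := by
      have : (1:ℕ) ≤ 2 ^ ℓ := Nat.one_le_two_pow
      omega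
    have h2 : (2:ℕ) ^ ℓ + (2 ^ ℓ - 1) = 2 ^ (ℓ+1) - 1 := h1.symm
    rw [del, h1, Finset.sum_range_add]
    have key : del ℓ (fun i => f (2 ^ ℓ + i)) - del ℓ f - f (2 ^ ℓ + (2 ^ ℓ - 1))
        = (del ℓ (fun i => f (2 ^ ℓ + i)) - f (2 ^ ℓ + (2 ^ ℓ - 1))) - del ℓ f := by ring
    rw [key]
    calc |(del ℓ (fun i => f (2 ^ ℓ + i)) - f (2 ^ ℓ + (2 ^ ℓ - 1))) - del ℓ f|
        ≤ |del ℓ (fun i => f (2 ^ ℓ + i)) - f (2 ^ ℓ + (2 ^ ℓ - 1))| + |del ℓ f| :=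
          abs_sub _ _
      _ ≤ (∑ i ∈ Finset.range (2 ^ ℓ - 1), |f (2 ^ ℓ + i)|)
          + ∑ i ∈ Finset.range (2 ^ ℓ), |f i| := add_le_add (ih _) (del_abs_le _ _)
      _ = _ := add_comm _ _

/-- Every `Δ_ℓ*` subset of `ℕ` is syndetic. -/
theorem DeltaEllStar_syndetic (ℓ : ℕ) (hℓ : 1 ≤ ℓ) (D : Set ℕ)
    (hD : ∀ n : ℕ → ℕ, StrictMono n →
      ∃ k : ℕ → ℕ, StrictMono k ∧ ∃ d ∈ D, (d : ℤ) = del ℓ (fun i => (n (k i) : ℤ))) :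
    ∃ N : ℕ, 0 < N ∧ ∀ M : ℕ, ∃ j : ℕ, M < j ∧ j ≤ M + N ∧ j ∈ D := by
  by_contra h
  push_neg at h
  have h' : ∀ N : ℕ, ∃ M, ∀ j, M < j → j ≤ M + (N + 1) → j ∉ D :=
    fun N => h (N + 1) (Nat.succ_pos N)
  choose gap hgap using h'
  -- build the sequence n
  obtain ⟨n, hn0, hnS⟩ : ∃ n : ℕ → ℕ, n 0 = 0 ∧
      ∀ j, n (j + 1) = gap (2 * (2 ^ ℓ * n j)) + 2 ^ ℓ * n j + 1 :=
    ⟨fun j => Nat.rec 0 (fun _ p => gap (2 * (2 ^ ℓ * p)) + 2 ^ ℓ * p + 1) j,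
      rfl, fun j => rfl⟩
  have hpow : (1:ℕ) ≤ 2 ^ ℓ := Nat.one_le_two_pow
  have hmono : StrictMono n := by
    apply strictMono_nat_of_lt_succ
    intro j
    rw [hnS j]
    have : n j ≤ 2 ^ ℓ * n j := Nat.le_mul_of_pos_left _ (by omega)
    omega
  obtain ⟨k, hk, d, hdD, hd⟩ := hD n hmono
  set F : ℕ → ℤ := fun i => (n (k i) : ℤ) with hF
  have hp1 : (2:ℕ) ≤ 2 ^ ℓ := by
    calc (2:ℕ) = 2 ^ 1 := rfl
    _ ≤ 2 ^ ℓ := Nat.pow_le_pow_right (by norm_num) hℓ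
  have hj1 : 1 ≤ k (2 ^ ℓ - 1) := le_trans (by omega) (hk.le_apply)
  obtain ⟨m, hm⟩ : ∃ m, k (2 ^ ℓ - 1) = m + 1 := ⟨k (2 ^ ℓ - 1) - 1, by omega⟩
  -- bound on the error term
  have hbound : |del ℓ F - F (2 ^ ℓ - 1)| ≤ ((2 ^ ℓ * n m : ℕ) : ℤ) := by
    refine le_trans (del_sub_le ℓ F) ?_
    have hterm : ∀ i ∈ Finset.range (2 ^ ℓ - 1), |F i| ≤ ((n m : ℕ) : ℤ) := by
      intro i hi
      rw [Finset.mem_range] at hi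
      have hki : k i < m + 1 := by rw [← hm]; exact hk hi
      have : n (k i) ≤ n m := hmono.monotone (by omega)
      simp only [hF, abs_of_nonneg (Int.natCast_nonneg _)]
      exact_mod_cast this
    calc ∑ i ∈ Finset.range (2 ^ ℓ - 1), |F i|
        ≤ (Finset.range (2 ^ ℓ - 1)).card • ((n m : ℕ) : ℤ) :=
          Finset.sum_le_card_nsmul _ _ _ hterm
      _ = ((2 ^ ℓ - 1 : ℕ) : ℤ) * (n m : ℤ) := by
          simp [nsmul_eq_mul]
      _ ≤ ((2 ^ ℓ : ℕ) : ℤ) * (n m : ℤ) := by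
          apply mul_le_mul_of_nonneg_right _ (Int.natCast_nonneg _)
          exact_mod_cast Nat.sub_le _ _
      _ = ((2 ^ ℓ * n m : ℕ) : ℤ) := by push_cast; ring
  set B : ℕ := 2 ^ ℓ * n m with hB
  set M : ℕ := gap (2 * B) with hM
  have htop : F (2 ^ ℓ - 1) = ((M + B + 1 : ℕ) : ℤ) := by
    simp only [hF, hm, hnS m, ← hB, ← hM]
  have habs : |(d : ℤ) - ((M + B + 1 : ℕ) : ℤ)| ≤ (B : ℤ) := by
    rw [hd, ← htop]; exact hbound
  rw [abs_le] at habs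
  have hd1 : M < d := by
    have := habs.1; push_cast at this ⊢; omega
  have hd2 : d ≤ M + (2 * B + 1) := by
    have := habs.2; push_cast at this ⊢; omega
  exact hgap (2 * B) d hd1 hd2 hdD
end

section
/- The set D = {9·Σ_{s=i}^{j} 10^s : 0 ≤ i ≤ j} = {10^{j+1} - 10^i : 0 ≤ i ≤ j} is not an IP₃ set: there do not exist natural numbers n₁, n₂, n₃ ≥ 1 such that all of n₁, n₂, n₃, n₁+n₂, n₁+n₃, n₂+n₃, n₁+n₂+n₃ belong to D. -/
/-- The set of differences of distinct powers of 10. -/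
def powerTenDiffs : Set ℕ := {m | ∃ i j : ℕ, i ≤ j ∧ m = 10 ^ (j + 1) - 10 ^ i}

/-!
The element `10^(j+1) - 10^i` of `powerTenDiffs` is the block of nines in decimal positions
`i, …, j`. If two blocks `[i, j]` and `[k, l]` add up to a block `[n, m]`, then
`10^(j+1) + 10^(l+1) + 10^n = 10^(m+1) + 10^i + 10^k`. A sum of fewer than ten powers of ten
determines its multiset of exponents, so the two blocks must abut: `k = j + 1` or `i = l + 1`.
Three blocks cannot pairwise abut.
-/

namespace Multiset

variable {b m : ℕ} {s : Multiset ℕ}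

lemma pow_le_sum_map_pow (hm : m ∈ s) : b ^ m ≤ (s.map (b ^ ·)).sum :=
  single_le_sum (fun _ _ => Nat.zero_le _) _ (mem_map_of_mem _ hm)

lemma sum_map_pow_lt (hb : 0 < b) (hs : card s < b) (hm : ∀ x ∈ s, x ≤ m) :
    (s.map (b ^ ·)).sum < b ^ (m + 1) :=
  calc (s.map (b ^ ·)).sum ≤ card s • b ^ m := by
        simpa using sum_le_card_nsmul (s.map (b ^ ·)) (b ^ m) (by
          simpa using fun x hx => Nat.pow_le_pow_right hb (hm x hx))
    _ < b * b ^ m := by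
        rw [smul_eq_mul]
        exact Nat.mul_lt_mul_of_pos_right hs (Nat.pow_pos hb)
    _ = b ^ (m + 1) := (pow_succ' b m).symm

lemma log_sum_map_pow (hb : 1 < b) (hs : card s < b) (hm : m ∈ s) (hmax : ∀ x ∈ s, x ≤ m) :
    Nat.log b (s.map (b ^ ·)).sum = m :=
  Nat.log_eq_of_pow_le_of_lt_pow (pow_le_sum_map_pow hm) (sum_map_pow_lt (by omega) hs hmax)

lemma sum_map_pow_eq_zero_iff (hb : 0 < b) : (s.map (b ^ ·)).sum = 0 ↔ s = 0 := by
  simp [sum_eq_zero_iff, eq_zero_iff_forall_notMem, hb.ne']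

/-- Uniqueness of base-`b` expansions: `card s < b` keeps every digit below `b`. -/
theorem eq_of_sum_map_pow_eq (hb : 1 < b) {t : Multiset ℕ} (hs : card s < b)
    (ht : card t < b) (h : (s.map (b ^ ·)).sum = (t.map (b ^ ·)).sum) : s = t := by
  induction s using strongInductionOn generalizing t with
  | ih s ih =>
  have hb0 : 0 < b := by omega
  rcases eq_or_ne s 0 with rfl | hs0
  · exact ((sum_map_pow_eq_zero_iff hb0).mp (by simpa using h.symm)).symm
  have ht0 : t ≠ 0 := by
    rintro rfl
    exact hs0 ((sum_map_pow_eq_zero_iff hb0).mp (by simpa using h))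
  obtain ⟨m, hms, hmax⟩ := exists_max_image id hs0
  obtain ⟨m', hmt, hmax'⟩ := exists_max_image id ht0
  have hmm' : m = m' := by
    rw [← log_sum_map_pow hb hs hms hmax, ← log_sum_map_pow hb ht hmt hmax', h]
  subst hmm'
  rw [← cons_erase hms, ← cons_erase hmt] at h ⊢
  simp only [map_cons, sum_cons, add_right_inj] at h
  rw [ih _ (erase_lt.mpr hms) ((card_erase_le).trans_lt hs)
    ((card_erase_le).trans_lt ht) h]

end Multiset

lemma blocks_adjacent_of_add_mem {i j k l : ℕ} (hij : i ≤ j) (hkl : k ≤ l)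
    (h : 10 ^ (j + 1) - 10 ^ i + (10 ^ (l + 1) - 10 ^ k) ∈ powerTenDiffs) :
    k = j + 1 ∨ i = l + 1 := by
  obtain ⟨n, m, hnm, h⟩ := h
  have hi : 10 ^ i ≤ 10 ^ (j + 1) := Nat.pow_le_pow_right (by norm_num) (by omega)
  have hk : 10 ^ k ≤ 10 ^ (l + 1) := Nat.pow_le_pow_right (by norm_num) (by omega)
  have hn : 10 ^ n ≤ 10 ^ (m + 1) := Nat.pow_le_pow_right (by norm_num) (by omega)
  have hexp : ({j + 1, l + 1, n} : Multiset ℕ) = {m + 1, i, k} :=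
    Multiset.eq_of_sum_map_pow_eq (b := 10) (by norm_num) (by simp) (by simp) (by simp; omega)
  have hcj := congrArg (Multiset.count (j + 1)) hexp
  have hcl := congrArg (Multiset.count (l + 1)) hexp
  simp only [Multiset.insert_eq_cons, Multiset.count_cons, Multiset.count_singleton] at hcj hcl
  split_ifs at hcj hcl <;> omega

/-- `{10^{j+1} - 10^i : 0 ≤ i ≤ j}` is not an `IP₃` set. -/
theorem powerTenDiffs_not_IP3 :
    ¬ ∃ n₁ n₂ n₃ : ℕ, 1 ≤ n₁ ∧ 1 ≤ n₂ ∧ 1 ≤ n₃ ∧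
      n₁ ∈ powerTenDiffs ∧ n₂ ∈ powerTenDiffs ∧ n₃ ∈ powerTenDiffs ∧
      n₁ + n₂ ∈ powerTenDiffs ∧ n₁ + n₃ ∈ powerTenDiffs ∧ n₂ + n₃ ∈ powerTenDiffs ∧
      n₁ + n₂ + n₃ ∈ powerTenDiffs := by
  rintro ⟨n₁, n₂, n₃, -, -, -, ⟨i₁, j₁, hij₁, rfl⟩, ⟨i₂, j₂, hij₂, rfl⟩, ⟨i₃, j₃, hij₃, rfl⟩,
    h₁₂, h₁₃, h₂₃, -⟩
  have := blocks_adjacent_of_add_mem hij₁ hij₂ h₁₂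
  have := blocks_adjacent_of_add_mem hij₁ hij₃ h₁₃
  have := blocks_adjacent_of_add_mem hij₂ hij₃ h₂₃
  omega
end

section
/- Let (n_k)_{k∈ℕ} be a strictly increasing sequence of natural numbers satisfying n_{k+1}/n_k ≥ 3 for all k. Then for any finite nonempty sets α, β, γ ⊆ ℕ: Σ_{j∈α} n_j + Σ_{j∈β} n_j = Σ_{j∈γ} n_j if and only if α ∪ β = γ and α ∩ β = ∅. -/
/-!
Since `n (k+1) ≥ 3 n k`, each `n m` exceeds twice the sum of all earlier terms, so a sum
`∑ a k * n k` with digits `a k ∈ {0, 1, 2}` determines its digits, as in base 3 (compare the top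
digits, then recurse). The two sides of the equation have digits `[k ∈ α] + [k ∈ β]` and `[k ∈ γ]`.
-/
open Finset

theorem Nat.eq_of_mul_add_eq_mul_add {x y N r r' : ℕ} (hr : r < N) (hr' : r' < N)
    (h : x * N + r = y * N + r') : x = y := by
  have hN : 0 < N := by omega
  have := congrArg (· / N) h
  simpa [Nat.mul_comm _ N, Nat.mul_add_div hN, Nat.div_eq_of_lt hr, Nat.div_eq_of_lt hr'] using this

section Dominating

variable {n : ℕ → ℕ}

theorem two_mul_sum_range_lt_of_three_mul_le (h0 : 0 < n 0) (hlac : ∀ k, 3 * n k ≤ n (k + 1))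
    (m : ℕ) : 2 * ∑ k ∈ range m, n k < n m := by
  induction m with
  | zero => simpa using h0
  | succ m ih =>
    have := hlac m
    rw [sum_range_succ]
    omega

variable (hdom : ∀ m, 2 * ∑ k ∈ range m, n k < n m)
include hdom

theorem sum_digits_lt {a : ℕ → ℕ} (ha : ∀ k, a k ≤ 2) {s : Finset ℕ} {m : ℕ}
    (hs : ∀ k ∈ s, k < m) : ∑ k ∈ s, a k * n k < n m :=
  calc ∑ k ∈ s, a k * n k ≤ ∑ k ∈ s, 2 * n k := sum_le_sum fun k _ => Nat.mul_le_mul_right _ (ha k)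
    _ ≤ 2 * ∑ k ∈ range m, n k := by
      rw [← mul_sum]
      exact Nat.mul_le_mul_left _ (sum_le_sum_of_subset fun k hk => mem_range.2 (hs k hk))
    _ < n m := hdom m

theorem eqOn_of_sum_digits_eq {a b : ℕ → ℕ} (ha : ∀ k, a k ≤ 2) (hb : ∀ k, b k ≤ 2)
    (s : Finset ℕ) (h : ∑ k ∈ s, a k * n k = ∑ k ∈ s, b k * n k) : ∀ k ∈ s, a k = b k := by
  induction s using Finset.induction_on_max with
  | empty => simp
  | insert m s hlt ih =>
    have hm : m ∉ s := fun hm => (hlt m hm).false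
    rw [sum_insert hm, sum_insert hm] at h
    have htop : a m = b m := Nat.eq_of_mul_add_eq_mul_add
      (sum_digits_lt hdom ha hlt) (sum_digits_lt hdom hb hlt) h
    rw [htop, Nat.add_left_cancel_iff] at h
    simpa [htop] using ih h

end Dominating

theorem sum_indicator_mul_of_subset {ι R : Type*} [DecidableEq ι] [NonAssocSemiring R]
    {s t : Finset ι} (n : ι → R) (h : t ⊆ s) :
    ∑ k ∈ s, (if k ∈ t then 1 else 0) * n k = ∑ k ∈ t, n k := by
  simp [ite_mul, sum_ite_mem, inter_eq_right.2 h]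

theorem lacunary_sum_injectivity_general (n : ℕ → ℕ)
    (hpos : ∀ k, 0 < n k) (hlac : ∀ k, 3 * n k ≤ n (k + 1)) :
    ∀ α β γ : Finset ℕ, α.Nonempty → β.Nonempty → γ.Nonempty →
      ((∑ j ∈ α, n j) + (∑ j ∈ β, n j) = ∑ j ∈ γ, n j ↔ α ∪ β = γ ∧ Disjoint α β) := by
  intro α β γ _ _ _
  refine ⟨fun h => ?_, fun ⟨hγ, hdisj⟩ => hγ ▸ (sum_union hdisj).symm⟩
  set s := α ∪ β ∪ γ
  have hdigits : ∀ k ∈ s, (if k ∈ α then 1 else 0) + (if k ∈ β then 1 else 0) =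
      if k ∈ γ then 1 else 0 := by
    refine eqOn_of_sum_digits_eq (two_mul_sum_range_lt_of_three_mul_le (hpos 0) hlac)
      (fun k => by split_ifs <;> omega) (fun k => by split_ifs <;> omega) s ?_
    simp only [add_mul, sum_add_distrib]
    rwa [sum_indicator_mul_of_subset n (subset_union_left.trans subset_union_left),
      sum_indicator_mul_of_subset n (subset_union_right.trans subset_union_left),
      sum_indicator_mul_of_subset n subset_union_right]
  have hmem : ∀ k, (if k ∈ α then 1 else 0) + (if k ∈ β then 1 else 0) =
      if k ∈ γ then 1 else 0 := fun k => by
    by_cases hk : k ∈ s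
    · exact hdigits k hk
    · simp_all [s]
  refine ⟨ext fun k => ?_, disjoint_left.2 fun k hα hβ => ?_⟩
  · have := hmem k
    rw [mem_union]
    split_ifs at this <;> simp_all
  · have := hmem k
    simp only [hα, hβ, if_true] at this
    split_ifs at this
    omega

/-- If `(n_k)` is a strictly increasing sequence of positive integers with
`n_{k+1} ≥ 3 n_k`, then for finite nonempty `α, β, γ ⊆ ℕ`,
`Σ_{α} n + Σ_{β} n = Σ_{γ} n` iff `α ∪ β = γ` and `α ∩ β = ∅`. -/
theorem lacunary_sum_injectivity (n : ℕ → ℕ) (hmono : StrictMono n)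
    (hpos : ∀ k, 0 < n k) (hlac : ∀ k, 3 * n k ≤ n (k + 1)) :
    ∀ α β γ : Finset ℕ, α.Nonempty → β.Nonempty → γ.Nonempty →
      ((∑ j ∈ α, n j) + (∑ j ∈ β, n j) = ∑ j ∈ γ, n j ↔ α ∪ β = γ ∧ Disjoint α β) :=
  lacunary_sum_injectivity_general n hpos hlac
end

section
/- Let ℓ ≥ 2 and let (n_k)_{k∈ℕ} be an increasing sequence of natural numbers such that for all finite nonempty sets α, β, γ ⊆ ℕ, Σ_{j∈α} n_j + Σ_{j∈β} n_j = Σ_{j∈γ} n_j holds if and only if α ∪ β = γ and α ∩ β = ∅. Then the finite sums set FS((n_k)_{k∈ℕ}) does not contain D₂((c_k)_{k=1}^{14}) for any 14-element sequence (c_k)_{k=1}^{14} of integers with D₂((c_k)_{k=1}^{14}) ⊆ ℕ. In particular FS((n_k)) is not a Δ_{2,14} set. -/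
/-!
Only eight terms of the sequence `c` are needed. Write `d(i,j,k,l) = (c l - c k) - (c j - c i)`
and let `S(i,j,k,l)` be a set of indices whose `n`-sum is `d(i,j,k,l)`. The identities
`d(2345) + d(0124) = d(0135)`, `d(2345) + d(1256) = d(1346)`, `d(1346) + d(3567) = d(1457)` and
`d(0135) + d(1457) = d(0347)` hold for every `c`. Since a sum `Σ_α n + Σ_β n = Σ_γ n` forces
`γ = α ⊔ β`, the first three give `S(2345) ⊆ S(0135)` and `S(2345) ⊆ S(1346) ⊆ S(1457)`, while
the fourth makes `S(0135)` and `S(1457)` disjoint; so the nonempty set `S(2345)` would be empty.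
-/

open Finset

/-- `x ∈ FS((n_k))`. -/
def MemFS (n : ℕ → ℕ) (x : ℤ) : Prop :=
  ∃ F : Finset ℕ, F.Nonempty ∧ ∑ j ∈ F, (n j : ℤ) = x

def UniqueSumDecomposition (n : ℕ → ℕ) : Prop :=
  ∀ α β γ : Finset ℕ, α.Nonempty → β.Nonempty → γ.Nonempty →
    ((∑ j ∈ α, n j) + (∑ j ∈ β, n j) = ∑ j ∈ γ, n j ↔ α ∪ β = γ ∧ Disjoint α β)

theorem UniqueSumDecomposition.union_eq_and_disjoint {n : ℕ → ℕ}
    (hinj : UniqueSumDecomposition n) {α β γ : Finset ℕ}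
    (hα : α.Nonempty) (hβ : β.Nonempty) (hγ : γ.Nonempty)
    (h : (∑ j ∈ α, (n j : ℤ)) + ∑ j ∈ β, (n j : ℤ) = ∑ j ∈ γ, (n j : ℤ)) :
    α ∪ β = γ ∧ Disjoint α β :=
  (hinj α β γ hα hβ hγ).mp (by exact_mod_cast h)

theorem UniqueSumDecomposition.not_forall_secondDiff_memFS_fin_eight {n : ℕ → ℕ}
    (hinj : UniqueSumDecomposition n) (c : Fin 8 → ℤ) :
    ¬ ∀ k₁ k₂ k₃ k₄ : Fin 8, k₁ < k₂ → k₂ < k₃ → k₃ < k₄ →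
      MemFS n ((c k₄ - c k₃) - (c k₂ - c k₁)) := by
  intro h
  obtain ⟨A, hA, hAs⟩ := h 2 3 4 5 (by decide) (by decide) (by decide)
  obtain ⟨B, hB, hBs⟩ := h 0 1 2 4 (by decide) (by decide) (by decide)
  obtain ⟨C, hC, hCs⟩ := h 0 1 3 5 (by decide) (by decide) (by decide)
  obtain ⟨D, hD, hDs⟩ := h 1 2 5 6 (by decide) (by decide) (by decide)
  obtain ⟨E, hE, hEs⟩ := h 1 3 4 6 (by decide) (by decide) (by decide)
  obtain ⟨G, hG, hGs⟩ := h 3 5 6 7 (by decide) (by decide) (by decide)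
  obtain ⟨H, hH, hHs⟩ := h 1 4 5 7 (by decide) (by decide) (by decide)
  obtain ⟨K, hK, hKs⟩ := h 0 3 4 7 (by decide) (by decide) (by decide)
  have hABC := hinj.union_eq_and_disjoint hA hB hC
    (by rw [hAs, hBs, hCs]; ring)
  have hADE := hinj.union_eq_and_disjoint hA hD hE
    (by rw [hAs, hDs, hEs]; ring)
  have hEGH := hinj.union_eq_and_disjoint hE hG hH
    (by rw [hEs, hGs, hHs]; ring)
  have hCHK := hinj.union_eq_and_disjoint hC hH hK
    (by rw [hCs, hHs, hKs]; ring)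
  have hAC : A ⊆ C := hABC.1 ▸ subset_union_left
  have hAH : A ⊆ H := (hADE.1 ▸ subset_union_left).trans (hEGH.1 ▸ subset_union_left)
  obtain ⟨x, hx⟩ := hA
  exact disjoint_left.mp hCHK.2 (hAC hx) (hAH hx)

theorem FS_not_Delta_two_fourteen_general (n : ℕ → ℕ)
    (hinj : ∀ α β γ : Finset ℕ, α.Nonempty → β.Nonempty → γ.Nonempty →
      ((∑ j ∈ α, n j) + (∑ j ∈ β, n j) = ∑ j ∈ γ, n j ↔ α ∪ β = γ ∧ Disjoint α β)) :
    ¬ ∃ c : Fin 14 → ℤ,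
      (∀ k₁ k₂ k₃ k₄ : Fin 14, k₁ < k₂ → k₂ < k₃ → k₃ < k₄ →
        0 < (c k₄ - c k₃) - (c k₂ - c k₁)) ∧
      (∀ k₁ k₂ k₃ k₄ : Fin 14, k₁ < k₂ → k₂ < k₃ → k₃ < k₄ →
        ∃ F : Finset ℕ, F.Nonempty ∧
          (∑ j ∈ F, (n j : ℤ)) = (c k₄ - c k₃) - (c k₂ - c k₁)) := by
  rintro ⟨c, -, hFS⟩
  have hcast : StrictMono (Fin.castLE (by norm_num : 8 ≤ 14)) := Fin.strictMono_castLE _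
  exact UniqueSumDecomposition.not_forall_secondDiff_memFS_fin_eight hinj
    (c ∘ Fin.castLE (by norm_num)) fun k₁ k₂ k₃ k₄ h₁₂ h₂₃ h₃₄ =>
      hFS _ _ _ _ (hcast h₁₂) (hcast h₂₃) (hcast h₃₄)

/-- If `(n_k)` is strictly increasing and satisfies the sum-injectivity condition, then
`FS((n_k))` does not contain `D₂((c_k)_{k=1}^{14})` for any 14-element integer sequence
whose second differences are all positive; i.e. `FS((n_k))` is not a `Δ_{2,14}` set. -/
theorem FS_not_Delta_two_fourteen (n : ℕ → ℕ) (hmono : StrictMono n) (hpos : ∀ k, 0 < n k)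
    (hinj : ∀ α β γ : Finset ℕ, α.Nonempty → β.Nonempty → γ.Nonempty →
      ((∑ j ∈ α, n j) + (∑ j ∈ β, n j) = ∑ j ∈ γ, n j ↔ α ∪ β = γ ∧ Disjoint α β)) :
    ¬ ∃ c : Fin 14 → ℤ,
      (∀ k₁ k₂ k₃ k₄ : Fin 14, k₁ < k₂ → k₂ < k₃ → k₃ < k₄ →
        0 < (c k₄ - c k₃) - (c k₂ - c k₁)) ∧
      (∀ k₁ k₂ k₃ k₄ : Fin 14, k₁ < k₂ → k₂ < k₃ → k₃ < k₄ →
        ∃ F : Finset ℕ, F.Nonempty ∧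
          (∑ j ∈ F, (n j : ℤ)) = (c k₄ - c k₃) - (c k₂ - c k₁)) :=
  FS_not_Delta_two_fourteen_general n hinj
end

section
/- For every ε > 0 there exists r ∈ ℕ such that for every real α, every r-element sequence (n_j)_{j=1}^r of integers contains indices 1 ≤ j₁ < j₂ < j₃ < j₄ ≤ r with ‖(∂(n_{j₁},n_{j₂},n_{j₃},n_{j₄}))³ α‖ < ε, where ∂(a,b,c,d) = (d−c) − (b−a) and ‖·‖ denotes the distance to the nearest integer. -/
/-!
Write `u = b - a` and `v = d - c`, so that `∂³ α = (v³ - u³) α + 3u²v α - 3uv² α`. Colour every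
increasing quadruple of indices by the arcs of length `1 / N` of `ℝ / ℤ` containing these three
terms. By the finite Ramsey theorem for `4`-sets, among `r` indices there are six, `x₀ < ⋯ < x₅`,
all of whose quadruples get the same colour. For each term there are three of these quadruples on
which its values satisfy `a = b + c` (the first telescopes, the second is additive in `v`, the
third in `u`); as `a` and `c` lie in the same arc, `b` is within `1 / N` of an integer, hence so is
the term on `(x₀, x₁, x₂, x₃)` up to another `1 / N`. Altogether `‖∂³ α‖ < 6 / N`.
-/

open Finset

section Ramsey

variable {α κ : Type*} [LinearOrder α]

def IsHomogeneous (C : Finset α → κ) (d : ℕ) (S : Finset α) (c : κ) : Prop :=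
  ∀ A ∈ S.powersetCard d, C A = c

def IsEndHomogeneous (C : Finset α → κ) (d : ℕ) (t : Finset α) (g : α → κ) : Prop :=
  ∀ A ∈ t.powersetCard (d + 1), ∀ x, IsLeast (A : Set α) x → C A = g x

lemma IsEndHomogeneous.insert_of_forall_lt {C : Finset α → κ} {d : ℕ} {t : Finset α}
    {g : α → κ} (ht : IsEndHomogeneous C d t g) {x : α} (hx : ∀ y ∈ t, x < y) {c : κ}
    (hc : IsHomogeneous (fun A => C (insert x A)) d t c) :
    IsEndHomogeneous C d (insert x t) (Function.update g x c) := by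
  intro A hA y hy
  rw [mem_powersetCard] at hA
  by_cases hyx : y = x
  · subst hyx
    have hmem : y ∈ A := hy.1
    have herase : A.erase y ∈ t.powersetCard d := by
      refine mem_powersetCard.2 ⟨fun z hz => ?_, by simp [card_erase_of_mem hmem, hA.2]⟩
      exact (mem_insert.1 (hA.1 (mem_of_mem_erase hz))).resolve_left (ne_of_mem_erase hz)
    simpa [insert_erase hmem] using hc _ herase
  · have hxA : x ∉ A := fun hxA =>
      (hx y ((mem_insert.1 (hA.1 hy.1)).resolve_left hyx)).not_ge (hy.2 hxA)
    have hAt : A ∈ t.powersetCard (d + 1) :=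
      mem_powersetCard.2 ⟨fun z hz => (mem_insert.1 (hA.1 hz)).resolve_left
        (fun h => hxA (h ▸ hz)), hA.2⟩
    rw [Function.update_of_ne hyx]
    exact ht A hAt y hy

/-- The bound `(fun k => R k + 1)^[ℓ] 0` comes from peeling off minima one at a time. -/
lemma exists_isEndHomogeneous {d : ℕ} {R : ℕ → ℕ}
    (hR : ∀ m (T : Finset α), R m ≤ #T → ∀ C : Finset α → κ,
      ∃ S ⊆ T, #S = m ∧ ∃ c, IsHomogeneous C d S c)
    (C : Finset α → κ) (ℓ : ℕ) (T : Finset α) (hT : (fun k => R k + 1)^[ℓ] 0 ≤ #T) :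
    ∃ t ⊆ T, #t = ℓ ∧ ∃ g, IsEndHomogeneous C d t g := by
  induction ℓ generalizing T with
  | zero =>
    exact ⟨∅, empty_subset _, rfl, fun _ => C ∅, by simp [IsEndHomogeneous]⟩
  | succ ℓ ih =>
    rw [Function.iterate_succ_apply'] at hT
    have hne : T.Nonempty := card_pos.1 (by omega)
    set x := T.min' hne
    obtain ⟨S, hST, hS, c, hc⟩ := hR ((fun k => R k + 1)^[ℓ] 0) (T.erase x)
      (by rw [card_erase_of_mem (T.min'_mem hne)]; omega) fun A => C (insert x A)
    obtain ⟨t, htS, ht, g, hg⟩ := ih S hS.ge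
    have hxt : ∀ y ∈ t, x < y := fun y hy =>
      T.min'_lt_of_mem_erase_min' hne (hST (htS hy))
    refine ⟨insert x t, insert_subset (T.min'_mem hne) ((htS.trans hST).trans (erase_subset _ _)),
      by rw [card_insert_of_notMem (fun h => (hxt x h).false), ht], _,
      hg.insert_of_forall_lt hxt fun A hA => hc A ?_⟩
    exact powersetCard_mono htS hA

end Ramsey

theorem exists_isHomogeneous_subset (κ : Type*) [Fintype κ] (d m : ℕ) :
    ∃ R, ∀ {α : Type*} [LinearOrder α] (T : Finset α), R ≤ #T → ∀ C : Finset α → κ,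
      ∃ S ⊆ T, #S = m ∧ ∃ c, IsHomogeneous C d S c := by
  induction d generalizing m with
  | zero =>
    refine ⟨m, fun T hT C => ?_⟩
    obtain ⟨S, hST, hS⟩ := exists_subset_card_eq hT
    exact ⟨S, hST, hS, C ∅, fun A hA => by rw [card_eq_zero.1 (mem_powersetCard.1 hA).2]⟩
  | succ d ih =>
    classical
    choose R hR using ih
    refine ⟨(fun k => R k + 1)^[Fintype.card κ * m] 0, fun T hT C => ?_⟩
    obtain ⟨t, htT, ht, g, hg⟩ := exists_isEndHomogeneous (fun m => hR m) C _ T hT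
    have : Nonempty κ := ⟨C ∅⟩
    obtain ⟨c, -, hc⟩ := exists_le_card_fiber_of_mul_le_card_of_maps_to
      (fun a _ => mem_univ (g a)) univ_nonempty (by rw [card_univ, ht])
    obtain ⟨S, hSt, hS⟩ := exists_subset_card_eq hc
    refine ⟨S, (hSt.trans (filter_subset _ _)).trans htT, hS, c, fun A hA => ?_⟩
    have hA := mem_powersetCard.1 hA
    have hne : A.Nonempty := card_pos.1 (by omega)
    rw [hg A (powersetCard_mono (hSt.trans (filter_subset _ _)) (mem_powersetCard.2 hA)) _
      (isLeast_min' A hne)]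
    exact (mem_filter.1 (hSt (hA.1 (A.min'_mem hne)))).2

theorem exists_strictMono_homogeneous_subset (κ : Type*) [Fintype κ] (d m : ℕ) :
    ∃ R, ∀ {α : Type*} [LinearOrder α] (T : Finset α), R ≤ #T → ∀ C : (Fin d → α) → κ,
      ∃ S ⊆ T, #S = m ∧ ∀ f g : Fin d → α, StrictMono f → StrictMono g →
        (∀ i, f i ∈ S) → (∀ i, g i ∈ S) → C f = C g := by
  obtain ⟨R, hR⟩ := exists_isHomogeneous_subset (Option κ) d m
  refine ⟨R, fun {α} _ T hT C => ?_⟩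
  obtain ⟨S, hST, hS, c, hc⟩ :=
    hR T hT fun A => if h : #A = d then some (C (A.orderEmbOfFin h)) else none
  have key : ∀ f : Fin d → α, StrictMono f → (∀ i, f i ∈ S) → some (C f) = c := by
    intro f hf hfS
    have hcard : #(univ.image f) = d := by
      rw [card_image_of_injective _ hf.injective, card_univ, Fintype.card_fin]
    have := hc (univ.image f) (mem_powersetCard.2 ⟨by simpa [image_subset_iff] using hfS, hcard⟩)
    simp only at this
    rwa [dif_pos hcard, ← orderEmbOfFin_unique hcard (by simp) hf] at this
  exact ⟨S, hST, hS, fun f g hf hg hfS hgS => Option.some_injective _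
    ((key f hf hfS).trans (key g hg hgS).symm)⟩

/-- The residue of `⌊N x⌋` mod `N` records in which of `N` equal arcs `x` lies on `ℝ / ℤ`. -/
noncomputable def cell (N : ℕ) (x : ℝ) : ZMod N := ⌊(N : ℝ) * x⌋

lemma norm_coe_le_abs_sub_intCast (x : ℝ) (m : ℤ) : ‖(x : UnitAddCircle)‖ ≤ |x - m| :=
  UnitAddCircle.norm_eq.trans_le (round_le x m)

lemma norm_coe_sub_lt_of_cell_eq {N : ℕ} (hN : 0 < N) {x y : ℝ} (h : cell N x = cell N y) :
    ‖((x - y : ℝ) : UnitAddCircle)‖ < 1 / N := by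
  obtain ⟨k, hk⟩ := (ZMod.intCast_eq_intCast_iff_dvd_sub _ _ _).1 h
  have hN' : (0 : ℝ) < N := Nat.cast_pos.2 hN
  have hk' : (N : ℝ) * (x - y + k) = Int.fract ((N : ℝ) * x) - Int.fract ((N : ℝ) * y) := by
    have := congrArg (fun z : ℤ => (z : ℝ)) hk
    push_cast at this
    rw [Int.fract, Int.fract]; linarith
  refine (norm_coe_le_abs_sub_intCast _ (-k)).trans_lt ?_
  rw [lt_div_iff₀ hN', Int.cast_neg, sub_neg_eq_add, ← abs_of_pos hN', ← abs_mul, mul_comm,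
    hk', abs_sub_lt_iff]
  constructor <;> linarith [Int.fract_nonneg ((N : ℝ) * x), Int.fract_lt_one ((N : ℝ) * x),
    Int.fract_nonneg ((N : ℝ) * y), Int.fract_lt_one ((N : ℝ) * y)]

/-- `b = a - c` lies within `1 / N` of an integer, and `w` within `1 / N` of `b` modulo `1`. -/
lemma norm_coe_lt_of_cell_eq {N : ℕ} (hN : 0 < N) {w a b c : ℝ} (habc : a = b + c)
    (hac : cell N a = cell N c) (hwb : cell N w = cell N b) :
    ‖(w : UnitAddCircle)‖ < 2 / N := by
  have hw : (w : UnitAddCircle) = ((w - b : ℝ) : UnitAddCircle) + ((a - c : ℝ) : UnitAddCircle) :=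
    by rw [← AddCircle.coe_add]; congr 1; linarith
  calc ‖(w : UnitAddCircle)‖
      ≤ ‖((w - b : ℝ) : UnitAddCircle)‖ + ‖((a - c : ℝ) : UnitAddCircle)‖ := hw ▸ norm_add_le _ _
    _ < 1 / N + 1 / N :=
        add_lt_add (norm_coe_sub_lt_of_cell_eq hN hwb) (norm_coe_sub_lt_of_cell_eq hN hac)
    _ = 2 / N := by ring

noncomputable def cubeTerms (α : ℝ) (y : Fin 4 → ℤ) : Fin 3 → ℝ :=
  let u := y 1 - y 0
  let v := y 3 - y 2
  ![((v ^ 3 - u ^ 3 : ℤ) : ℝ) * α, ((3 * u ^ 2 * v : ℤ) : ℝ) * α, ((3 * u * v ^ 2 : ℤ) : ℝ) * α]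

lemma cube_sub_mul_eq_cubeTerms (α : ℝ) (y : Fin 4 → ℤ) :
    ((((y 3 - y 2) - (y 1 - y 0)) ^ 3 : ℤ) : ℝ) * α =
      cubeTerms α y 0 + cubeTerms α y 1 - cubeTerms α y 2 := by
  simp only [cubeTerms, Matrix.cons_val]
  push_cast
  ring

noncomputable def cubeColour (N : ℕ) (α : ℝ) (y : Fin 4 → ℤ) : Fin 3 → ZMod N :=
  fun i => cell N (cubeTerms α y i)

lemma norm_cube_lt_of_cubeColour_eq {N : ℕ} (hN : 0 < N) (α : ℝ) (x : Fin 6 → ℤ)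
    (hx : ∀ s t : Fin 4 → Fin 6, StrictMono s → StrictMono t →
      cubeColour N α (x ∘ s) = cubeColour N α (x ∘ t)) :
    ‖(((((x 3 - x 2) - (x 1 - x 0)) ^ 3 : ℤ) : ℝ) * α : UnitAddCircle)‖ < 6 / N := by
  have hcell (s t : Fin 4 → Fin 6) (hs : StrictMono s) (ht : StrictMono t) (i : Fin 3) :
      cell N (cubeTerms α (x ∘ s) i) = cell N (cubeTerms α (x ∘ t) i) :=
    congrFun (hx s t hs ht) i
  set T := fun (s : Fin 4 → Fin 6) (i : Fin 3) => cubeTerms α (x ∘ s) i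
  have hsum₀ : T ![0, 1, 4, 5] 0 = T ![0, 1, 2, 3] 0 + T ![2, 3, 4, 5] 0 := by
    simp only [T, cubeTerms, Function.comp_apply, Matrix.cons_val]; push_cast; ring
  have hsum₁ : T ![0, 1, 2, 4] 1 = T ![0, 1, 2, 3] 1 + T ![0, 1, 3, 4] 1 := by
    simp only [T, cubeTerms, Function.comp_apply, Matrix.cons_val]; push_cast; ring
  have hsum₂ : T ![0, 2, 3, 4] 2 = T ![0, 1, 3, 4] 2 + T ![1, 2, 3, 4] 2 := by
    simp only [T, cubeTerms, Function.comp_apply, Matrix.cons_val]; push_cast; ring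
  have h₀ : ‖(T ![0, 1, 2, 3] 0 : UnitAddCircle)‖ < 2 / N :=
    norm_coe_lt_of_cell_eq hN hsum₀ (hcell _ _ (by decide) (by decide) 0) rfl
  have h₁ : ‖(T ![0, 1, 2, 3] 1 : UnitAddCircle)‖ < 2 / N :=
    norm_coe_lt_of_cell_eq hN hsum₁ (hcell _ _ (by decide) (by decide) 1) rfl
  have h₂ : ‖(T ![0, 1, 2, 3] 2 : UnitAddCircle)‖ < 2 / N :=
    norm_coe_lt_of_cell_eq hN hsum₂ (hcell _ _ (by decide) (by decide) 2)
      (hcell _ _ (by decide) (by decide) 2)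
  have hsplit := cube_sub_mul_eq_cubeTerms α (x ∘ ![0, 1, 2, 3])
  simp only [Function.comp_apply, Matrix.cons_val] at hsplit
  rw [hsplit, AddCircle.coe_sub, AddCircle.coe_add]
  calc _ ≤ ‖(T ![0, 1, 2, 3] 0 : UnitAddCircle)‖ + ‖(T ![0, 1, 2, 3] 1 : UnitAddCircle)‖ +
        ‖(T ![0, 1, 2, 3] 2 : UnitAddCircle)‖ := norm_sub_le_of_le (norm_add_le _ _) le_rfl
    _ < 2 / N + 2 / N + 2 / N := by gcongr
    _ = 6 / N := by ring

/-- Finitary version: for every `ε > 0` there is `r` (independent of `α`) such that any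
`r` integers contain `j₁ < j₂ < j₃ < j₄` with
`‖((n j₄ - n j₃) - (n j₂ - n j₁))³ α‖ < ε`. -/
theorem cubic_finitary_Delta_two_star :
    ∀ ε : ℝ, 0 < ε → ∃ r : ℕ, ∀ α : ℝ, ∀ n : Fin r → ℤ,
      ∃ j₁ j₂ j₃ j₄ : Fin r, j₁ < j₂ ∧ j₂ < j₃ ∧ j₃ < j₄ ∧
        ∃ m : ℤ, |((((n j₄ - n j₃) - (n j₂ - n j₁)) ^ 3 : ℤ) : ℝ) * α - (m : ℝ)| < ε := by
  intro ε hε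
  obtain ⟨N, hN⟩ := exists_nat_gt (6 / ε)
  have hN₀ : 0 < N := Nat.cast_pos.1 ((div_pos (by norm_num) hε).trans hN)
  have : NeZero N := ⟨hN₀.ne'⟩
  obtain ⟨R, hR⟩ := exists_strictMono_homogeneous_subset (Fin 3 → ZMod N) 4 6
  refine ⟨R, fun α n => ?_⟩
  obtain ⟨S, -, hS, hhom⟩ := hR (univ : Finset (Fin R)) (by simp) fun f => cubeColour N α (n ∘ f)
  set q := S.orderEmbOfFin hS
  have hsmall := norm_cube_lt_of_cubeColour_eq hN₀ α (n ∘ q) fun s t hs ht =>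
    hhom _ _ (q.strictMono.comp hs) (q.strictMono.comp ht) (fun _ => S.orderEmbOfFin_mem hS _)
      (fun _ => S.orderEmbOfFin_mem hS _)
  refine ⟨q 0, q 1, q 2, q 3, q.lt_iff_lt.2 (by decide), q.lt_iff_lt.2 (by decide),
    q.lt_iff_lt.2 (by decide), _, UnitAddCircle.norm_eq.symm.trans_lt
      (hsmall.trans ((div_lt_comm₀ hε (Nat.cast_pos.2 hN₀)).1 hN))⟩
end

section
/- For any real number α and any ε > 0, the set R = {n ∈ ℕ : ‖n³α‖ < ε} is Δ₂*: for every strictly increasing sequence (n_k)_{k∈ℕ} in ℕ there exist k₁ < k₂ < k₃ < k₄ with (n_{k₄} − n_{k₃}) − (n_{k₂} − n_{k₁}) ∈ ℕ and ‖((n_{k₄} − n_{k₃}) − (n_{k₂} − n_{k₁}))³ α‖ < ε. -/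
/-!
Colour each increasing triple `i < j < k` of indices by the classes in `ℝ/ℤ` of the four cubic
monomials `nᵢnⱼnₖα`, `nᵢ²nⱼα`, `nᵢnⱼ²α`, `nᵢ³α`. Ramsey's theorem for triples, in the form of a
compact colour space, yields a subsequence along which every colour is within `ε/64` of a
fixed point. Expanding `d³` for the second difference `d = (n₄ - n₃) - (n₂ - n₁)` pairs its
terms, with opposite signs, into 32 differences of two values of one monomial type, so
`‖d³α‖ < ε`.
-/

open Filter Topology

theorem Nat.exists_strictMono_forall_mem_image_range {F : Finset ℕ → Set ℕ}
    (hF : ∀ s, ∃ᶠ x in atTop, x ∈ F s) :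
    ∃ b : ℕ → ℕ, StrictMono b ∧ ∀ k, b k ∈ F ((Finset.range k).image b) := by
  choose next hnextF hnext_gt using fun s : Finset ℕ =>
    ((hF s).and_eventually (eventually_gt_atTop (s.sup id))).exists
  let hist : ℕ → Finset ℕ := fun k => Nat.rec ∅ (fun _ s => insert (next s) s) k
  have hist_eq : ∀ k, hist k = (Finset.range k).image (fun i => next (hist i)) := by
    intro k
    induction k with
    | zero => rfl
    | succ k ih => rw [Finset.range_add_one, Finset.image_insert, ← ih]
  refine ⟨fun k => next (hist k), strictMono_nat_of_lt_succ fun k => ?_, fun k => ?_⟩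
  · refine lt_of_le_of_lt ?_ (hnext_gt (hist (k + 1)))
    exact Finset.le_sup (f := id) (Finset.mem_insert_self _ _)
  · rw [← hist_eq]
    exact hnextF _

theorem exists_strictMono_dist_triple_lt {X : Type*} [PseudoMetricSpace X] [CompactSpace X]
    (C : ℕ → ℕ → ℕ → X) {δ : ℝ} (hδ : 0 < δ) :
    ∃ g : ℕ → ℕ, StrictMono g ∧ ∃ c : X, ∀ i j k, i < j → j < k →
      dist (C (g i) (g j) (g k)) c < δ := by
  set U := hyperfilter ℕ
  have hlim : ∀ f : ℕ → X, ∃ x, Tendsto f U (𝓝 x) := fun f =>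
    let ⟨x, _, hx⟩ := isCompact_univ.ultrafilter_le_nhds (U.map f) (by simp)
    ⟨x, hx⟩
  choose L hL using hlim
  have hnear : ∀ f : ℕ → X, ∀ᶠ x in U, dist (f x) (L f) < δ / 3 := fun f =>
    Metric.tendsto_nhds.1 (hL f) _ (by positivity)
  -- Iterated limits along `U`: `C s t x → c₂ s t`, `c₂ s t → c₁ s`, `c₁ s → L c₁`. Choosing the
  -- sequence greedily so that each new term is close to all three limits makes every triple
  -- colour `δ`-close to `L c₁`.
  let c₂ s t := L (C s t)
  let c₁ s := L (c₂ s)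
  let F : Finset ℕ → Set ℕ := fun s => {x | dist (c₁ x) (L c₁) < δ / 3 ∧
    ∀ i ∈ s, dist (c₂ i x) (c₁ i) < δ / 3 ∧ ∀ j ∈ s, dist (C i j x) (c₂ i j) < δ / 3}
  have hF : ∀ s, ∃ᶠ x in atTop, x ∈ F s := by
    intro s
    refine (Eventually.frequently ?_).filter_mono Nat.hyperfilter_le_atTop
    refine (hnear c₁).and ((s.eventually_all).2 fun i _ => (hnear (c₂ i)).and ?_)
    exact (s.eventually_all).2 fun j _ => hnear (C i j)
  obtain ⟨b, hb, hbF⟩ := Nat.exists_strictMono_forall_mem_image_range hF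
  refine ⟨b, hb, L c₁, fun i j k hij hjk => ?_⟩
  have hik : b i ∈ (Finset.range k).image b :=
    Finset.mem_image_of_mem b (Finset.mem_range.2 (hij.trans hjk))
  have hjk' : b j ∈ (Finset.range k).image b := Finset.mem_image_of_mem b (Finset.mem_range.2 hjk)
  have hij' : b i ∈ (Finset.range j).image b := Finset.mem_image_of_mem b (Finset.mem_range.2 hij)
  calc dist (C (b i) (b j) (b k)) (L c₁)
      ≤ dist (C (b i) (b j) (b k)) (c₂ (b i) (b j)) + dist (c₂ (b i) (b j)) (c₁ (b i))
        + dist (c₁ (b i)) (L c₁) := dist_triangle4 _ _ _ _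
    _ < δ / 3 + δ / 3 + δ / 3 := by
      gcongr
      · exact ((hbF k).2 _ hik).2 _ hjk'
      · exact ((hbF j).2 _ hij').1
      · exact (hbF i).1
    _ = δ := by ring

def cubicMonomials (α p q r : ℝ) : Fin 4 → UnitAddCircle :=
  ![↑(p * q * r * α), ↑(p ^ 2 * q * α), ↑(p * q ^ 2 * α), ↑(p ^ 3 * α)]

theorem UnitAddCircle.coe_secondDiff_cube_mul (α a b c e : ℝ) :
    let S p := ((p ^ 3 * α : ℝ) : UnitAddCircle)
    let P p q := ((p ^ 2 * q * α : ℝ) : UnitAddCircle)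
    let Q p q := ((p * q ^ 2 * α : ℝ) : UnitAddCircle)
    let T p q r := ((p * q * r * α : ℝ) : UnitAddCircle)
    (((((e - c) - (b - a)) ^ 3 * α : ℝ)) : UnitAddCircle) =
      (S a - S b) + (S e - S c)
      + 3 • ((P a e - P a b) + (P b e - P a c) + (P c e - P b c))
      + 3 • ((Q a b - Q b c) + (Q a c - Q b e) + (Q a e - Q c e))
      + 6 • ((T a b c - T a b e) + (T b c e - T a c e)) := by
  intro S P Q T
  simp only [S, P, Q, T, ← AddCircle.coe_sub, ← AddCircle.coe_add, ← AddCircle.coe_nsmul]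
  congr 1
  simp only [nsmul_eq_mul]
  ring

theorem norm_coe_secondDiff_cube_mul_lt {α η : ℝ} {x : ℕ → ℝ} {z : Fin 4 → UnitAddCircle}
    (hx : ∀ i j k, i < j → j < k → dist (cubicMonomials α (x i) (x j) (x k)) z < η)
    {a b c e : ℕ} (hab : a < b) (hbc : b < c) (hce : c < e) :
    ‖((((x e - x c) - (x b - x a)) ^ 3 * α : ℝ) : UnitAddCircle)‖ < 64 * η := by
  have close : ∀ (r : Fin 4) {i j k i' j' k' : ℕ}, i < j → j < k → i' < j' → j' < k' →
      ‖cubicMonomials α (x i) (x j) (x k) r - cubicMonomials α (x i') (x j') (x k') r‖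
        < 2 * η := by
    intro r i j k i' j' k' hij hjk hij' hjk'
    rw [← dist_eq_norm]
    calc _ ≤ dist (cubicMonomials α (x i) (x j) (x k) r) (z r)
            + dist (cubicMonomials α (x i') (x j') (x k') r) (z r) := dist_triangle_right _ _ _
      _ < η + η := add_lt_add_of_le_of_lt ((dist_le_pi_dist _ _ r).trans (hx _ _ _ hij hjk).le)
            ((dist_le_pi_dist _ _ r).trans_lt (hx _ _ _ hij' hjk'))
      _ = 2 * η := by ring
  -- A monomial involving `x e` is read off a triple starting at `e` or at `(·, e)`, which needs
  -- the later indices `e + 1` and `e + 2`.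
  have hS₁ := close 3 (i := a) (j := b) (k := c) (i' := b) (j' := c) (k' := e) hab hbc hbc hce
  have hS₂ := close 3 (i := e) (j := e + 1) (k := e + 2) (i' := c) (j' := e) (k' := e + 1)
    (by omega) (by omega) hce (by omega)
  have hP₁ := close 1 (i := a) (j := e) (k := e + 1) (i' := a) (j' := b) (k' := c)
    (by omega) (by omega) hab hbc
  have hP₂ := close 1 (i := b) (j := e) (k := e + 1) (i' := a) (j' := c) (k' := e)
    (by omega) (by omega) (by omega) hce
  have hP₃ := close 1 (i := c) (j := e) (k := e + 1) (i' := b) (j' := c) (k' := e)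
    hce (by omega) hbc hce
  have hQ₁ := close 2 (i := a) (j := b) (k := c) (i' := b) (j' := c) (k' := e) hab hbc hbc hce
  have hQ₂ := close 2 (i := a) (j := c) (k := e) (i' := b) (j' := e) (k' := e + 1)
    (by omega) hce (by omega) (by omega)
  have hQ₃ := close 2 (i := a) (j := e) (k := e + 1) (i' := c) (j' := e) (k' := e + 1)
    (by omega) (by omega) hce (by omega)
  have hT₁ := close 0 (i := a) (j := b) (k := c) (i' := a) (j' := b) (k' := e)
    hab hbc hab (by omega)
  have hT₂ := close 0 (i := b) (j := c) (k := e) (i' := a) (j' := c) (k' := e)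
    hbc hce (by omega) hce
  simp only [cubicMonomials, Matrix.cons_val] at hS₁ hS₂ hP₁ hP₂ hP₃ hQ₁ hQ₂ hQ₃ hT₁ hT₂
  rw [UnitAddCircle.coe_secondDiff_cube_mul]
  grw [norm_add_le, norm_add₄_le, norm_nsmul_le, norm_nsmul_le, norm_nsmul_le, norm_add₃_le,
    norm_add₃_le, norm_add_le]
  push_cast
  linarith

/-- For any real `α` and `ε > 0`, the set `{n : ‖n³α‖ < ε}` is `Δ₂*`: every strictly
increasing sequence in `ℕ` admits `k₁ < k₂ < k₃ < k₄` whose second difference `d` is a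
positive integer with `‖d³α‖ < ε`. -/
theorem cubic_is_Delta_two_star (α : ℝ) (ε : ℝ) (hε : 0 < ε) (n : ℕ → ℕ)
    (hmono : StrictMono n) :
    ∃ k₁ k₂ k₃ k₄ : ℕ, k₁ < k₂ ∧ k₂ < k₃ ∧ k₃ < k₄ ∧
      0 < ((n k₄ : ℤ) - n k₃) - ((n k₂ : ℤ) - n k₁) ∧
      ∃ m : ℤ,
        |(((((n k₄ : ℤ) - n k₃) - ((n k₂ : ℤ) - n k₁)) ^ 3 : ℤ) : ℝ) * α - (m : ℝ)| < ε := by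
  obtain ⟨g, hg, z, hz⟩ := exists_strictMono_dist_triple_lt
    (fun i j k => cubicMonomials α (n i) (n j) (n k)) (δ := ε / 64) (by positivity)
  set J := n (g 2) + n (g 1) + 3
  have hJ : J ≤ n (g J) := (hmono.comp hg).id_le J
  set d : ℤ := ((n (g J) : ℤ) - n (g 2)) - ((n (g 1) : ℤ) - n (g 0))
  refine ⟨g 0, g 1, g 2, g J, hg (by norm_num), hg (by norm_num), hg (by omega), by omega,
    round (((d ^ 3 : ℤ) : ℝ) * α), ?_⟩
  rw [← UnitAddCircle.norm_eq]
  have h := norm_coe_secondDiff_cube_mul_lt (α := α) (x := fun i => (n (g i) : ℝ)) hz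
    (a := 0) (b := 1) (c := 2) (e := J) (by norm_num) (by norm_num) (by omega)
  push_cast [d]
  linarith
end

section
/- Let p be a non-principal ultrafilter on ℕ, let X be a compact Hausdorff space, and let (x_n)_{n∈ℕ} be a sequence in X. Then p-lim over n of x_n along the ultrafilter −p+p equals p-lim_m p-lim_n x_{n−m}, where −p+p is the ultrafilter {A ⊆ ℕ : {n : n + A ∈ p} ∈ p} and x_{n−m} is considered for n > m. -/
open Filter

/-- For a non-principal ultrafilter `p` on `ℕ`, the ultrafilter `q = -p+p`
(characterized by `A ∈ q ↔ {n : n + A ∈ p} ∈ p`) satisfies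
`q-lim_n x_n = p-lim_m p-lim_n x_{n-m}` for every sequence `(x_n)` in a compact
Hausdorff space: if `y m` is the `p`-limit of `n ↦ x (n - m)` and `L` is the `p`-limit
of `y`, then `L` is the `q`-limit of `x`. -/
theorem plim_along_difference_ultrafilter
    {X : Type*} [TopologicalSpace X] [CompactSpace X] [T2Space X]
    (p q : Ultrafilter ℕ) (hp : ∀ n : ℕ, ({n} : Set ℕ) ∉ p)
    (hq : ∀ A : Set ℕ, A ∈ q ↔ {n : ℕ | (fun a => n + a) '' A ∈ p} ∈ p)
    (x : ℕ → X) (y : ℕ → X) (L : X)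
    (hy : ∀ m : ℕ, Tendsto (fun n => x (n - m)) (↑p) (nhds (y m)))
    (hL : Tendsto y (↑p) (nhds L)) :
    Tendsto x (↑q) (nhds L) := by
  have hcof : (↑p : Filter ℕ) ≤ cofinite := by
    rw [le_cofinite_iff_compl_singleton_mem]
    intro n
    rw [Ultrafilter.mem_coe, Ultrafilter.compl_mem_iff_notMem]
    exact hp n
  have hge : ∀ m : ℕ, {k : ℕ | m ≤ k} ∈ p := by
    intro m
    apply hcof
    have : {k : ℕ | m ≤ k} = {k : ℕ | k < m}ᶜ := by
      ext k; simp [not_lt]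
    rw [this]
    exact (Set.finite_Iio m).compl_mem_cofinite
  rw [tendsto_nhds]
  intro U hUo hLU
  rw [Ultrafilter.mem_coe, hq]
  have h1 : {m | y m ∈ U} ∈ p := (tendsto_nhds.mp hL) U hUo hLU
  refine p.toFilter.mem_of_superset h1 ?_
  intro m hm
  have h2 : {k : ℕ | x (k - m) ∈ U} ∈ p := (tendsto_nhds.mp (hy m)) U hUo hm
  have h3 : {k : ℕ | x (k - m) ∈ U} ∩ {k : ℕ | m ≤ k} ∈ p :=
    Filter.inter_mem h2 (hge m)
  refine p.toFilter.mem_of_superset h3 ?_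
  rintro k ⟨hk1, hk2⟩
  exact ⟨k - m, hk1, Nat.add_sub_cancel' hk2⟩
end

section
/- Let p be a non-principal ultrafilter on ℕ and let α be a real number. Then the (−p+p)-limit of the sequence (nα mod 1) in the circle ℝ/ℤ is 0; i.e., for every ε > 0, the set {n ∈ ℕ : ‖nα‖ < ε} belongs to −p+p. -/
/-- For a non-principal ultrafilter `p` on `ℕ` and any real `α`, the `(-p+p)`-limit of
`(nα mod 1)` is `0`: for every `ε > 0`, `{n : ‖nα‖ < ε} ∈ -p+p`, where `-p+p` is
characterized by `A ∈ q ↔ {n : n + A ∈ p} ∈ p`. -/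
theorem plim_linear_along_difference_ultrafilter
    (p q : Ultrafilter ℕ) (hp : ∀ n : ℕ, ({n} : Set ℕ) ∉ p)
    (hq : ∀ A : Set ℕ, A ∈ q ↔ {n : ℕ | (fun a => n + a) '' A ∈ p} ∈ p)
    (α : ℝ) :
    ∀ ε : ℝ, 0 < ε → {n : ℕ | ∃ m : ℤ, |(n : ℝ) * α - (m : ℝ)| < ε} ∈ q := by
  intro ε hε
  -- p contains all cofinite sets
  have hcof : ∀ s : Set ℕ, s.Finite → sᶜ ∈ p := by
    intro s hs
    by_contra h
    rw [Ultrafilter.compl_mem_iff_notMem, not_not] at h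
    obtain ⟨a, -, ha⟩ := Ultrafilter.eq_pure_of_finite_mem hs h
    exact hp a (by rw [ha]; exact rfl)
  set f : ℕ → ℝ := fun n => Int.fract ((n : ℝ) * α) with hf
  have hle : ↑(p.map f) ≤ Filter.principal (Set.Icc (0 : ℝ) 1) := by
    rw [Filter.le_principal_iff, Ultrafilter.coe_map, Filter.mem_map]
    refine Filter.mem_of_superset Filter.univ_mem ?_
    intro n _
    exact ⟨Int.fract_nonneg _, (Int.fract_lt_one _).le⟩
  obtain ⟨x, -, hx⟩ := isCompact_Icc.ultrafilter_le_nhds (p.map f) hle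
  -- the set of n with fract(nα) within ε/2 of x is in p
  have hS : {n : ℕ | |f n - x| < ε / 2} ∈ p := by
    have hb : Metric.ball x (ε / 2) ∈ nhds x := Metric.ball_mem_nhds x (by positivity)
    have := hx hb
    rw [Ultrafilter.coe_map, Filter.mem_map] at this
    refine Filter.mem_of_superset this ?_
    intro n hn
    simpa [Real.dist_eq] using hn
  rw [hq]
  refine Filter.mem_of_superset hS ?_
  intro n hn
  simp only [Set.mem_setOf_eq] at hn ⊢
  have hge : {m : ℕ | m < n}ᶜ ∈ p := hcof _ (Set.finite_Iio n)
  refine Filter.mem_of_superset (Filter.inter_mem hS hge) ?_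
  rintro m ⟨hm, hm2⟩
  simp only [Set.mem_compl_iff, Set.mem_setOf_eq, not_lt] at hm2 hm
  refine ⟨m - n, ?_, show n + (m - n) = m by omega⟩
  refine ⟨⌊(m : ℝ) * α⌋ - ⌊(n : ℝ) * α⌋, ?_⟩
  have hc : ((m - n : ℕ) : ℝ) = (m : ℝ) - (n : ℝ) := by
    push_cast [hm2]; ring
  have : ((m - n : ℕ) : ℝ) * α - ((⌊(m : ℝ) * α⌋ - ⌊(n : ℝ) * α⌋ : ℤ) : ℝ)
      = f m - f n := by
    simp only [hf, Int.fract]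
    push_cast [hc]
    ring
  rw [this]
  calc |f m - f n| = |(f m - x) - (f n - x)| := by ring_nf
    _ ≤ |f m - x| + |f n - x| := abs_sub _ _
    _ < ε / 2 + ε / 2 := add_lt_add hm hn
    _ = ε := by ring
end

section
/- Let p be a non-principal ultrafilter on ℕ, α a real number, and set p₁ = −p+p, p₂ = −p₁+p₁. Then the p₂-limit of the sequence (n³α mod 1) in ℝ/ℤ is 0; equivalently, for every ε > 0, {n ∈ ℕ : ‖n³α‖ < ε} ∈ p₂. -/
open Filter Topology

noncomputable abbrev T := AddCircle (1:ℝ)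

noncomputable def UL (q : Ultrafilter ℕ) (f : ℕ → T) : T := (q.map f).lim

lemma tendsto_UL (q : Ultrafilter ℕ) (f : ℕ → T) : Tendsto f q (𝓝 (UL q f)) :=
  Ultrafilter.le_nhds_lim (q.map f)

lemma UL_eq {q : Ultrafilter ℕ} {f : ℕ → T} {x : T} (h : Tendsto f q (𝓝 x)) : UL q f = x :=
  tendsto_nhds_unique (tendsto_UL q f) h

lemma uf_le_cofinite {q : Ultrafilter ℕ} (hq : ∀ n : ℕ, ({n} : Set ℕ) ∉ q) :
    (q : Filter ℕ) ≤ cofinite :=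
  le_cofinite_iff_compl_singleton_mem.2 fun n => (q.compl_mem_iff_notMem).2 (hq n)

lemma tail_mem {q : Ultrafilter ℕ} (hq : ∀ n : ℕ, ({n} : Set ℕ) ∉ q) (n : ℕ) :
    {a | n ≤ a} ∈ q :=
  uf_le_cofinite hq ((Set.finite_Iio n).subset (by intro a ha; simpa using ha) : _)

/-- Shift lemma. -/
lemma UL_shift {q q' : Ultrafilter ℕ} (hq : ∀ n : ℕ, ({n} : Set ℕ) ∉ q)
    (hq' : ∀ A : Set ℕ, A ∈ q' ↔ {n : ℕ | (fun a => n + a) '' A ∈ q} ∈ q)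
    (f : ℕ → T) : UL q' f = UL q (fun n => UL q (fun a => f (a - n))) := by
  refine UL_eq ?_
  set g : ℕ → T := fun n => UL q (fun a => f (a - n)) with hg
  rw [tendsto_nhds]
  intro U hUopen hxU
  rw [Ultrafilter.mem_coe, hq']
  have hgU : {n | g n ∈ U} ∈ q := (tendsto_UL q g) (hUopen.mem_nhds hxU)
  filter_upwards [hgU] with n hn
  have h1 : {a | f (a - n) ∈ U} ∈ q := (tendsto_UL q (fun a => f (a - n))) (hUopen.mem_nhds hn)
  filter_upwards [h1, tail_mem hq n] with a ha hna
  exact ⟨a - n, ha, Nat.add_sub_cancel' hna⟩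

lemma UL_zsmul_lin {q q' : Ultrafilter ℕ} (hq : ∀ n : ℕ, ({n} : Set ℕ) ∉ q)
    (hq' : ∀ A : Set ℕ, A ∈ q' ↔ {n : ℕ | (fun a => n + a) '' A ∈ q} ∈ q)
    (x : T) : UL q' (fun n => (n : ℤ) • x) = 0 := by
  rw [UL_shift hq hq']
  set ℓ : T := UL q (fun a => (a : ℤ) • x) with hℓ
  have inner : ∀ n : ℕ, UL q (fun a => ((a - n : ℕ) : ℤ) • x) = ℓ - (n : ℤ) • x := by
    intro n
    refine UL_eq ?_
    have hev : (fun a : ℕ => ((a - n : ℕ) : ℤ) • x) =ᶠ[(q : Filter ℕ)]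
        (fun a : ℕ => (a : ℤ) • x - (n : ℤ) • x) := by
      filter_upwards [tail_mem hq n] with a ha
      have : ((a - n : ℕ) : ℤ) = (a : ℤ) - (n : ℤ) := by omega
      rw [this, sub_zsmul, sub_eq_add_neg]
    exact Tendsto.congr' hev.symm ((tendsto_UL q _).sub tendsto_const_nhds)
  simp only [inner]
  refine UL_eq ?_
  have h := (tendsto_const_nhds : Tendsto (fun _ : ℕ => ℓ) (q : Filter ℕ) (𝓝 ℓ)).sub
    (tendsto_UL q (fun a => (a : ℤ) • x))
  rw [← hℓ, sub_self] at h; exact h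

/-- For a non-principal ultrafilter `p` on `ℕ`, with `p₁ = -p+p` and `p₂ = -p₁+p₁`
(each characterized by `A ∈ -q+q ↔ {n : n + A ∈ q} ∈ q`), and any real `α`, the
`p₂`-limit of `(n³α mod 1)` is `0`: for every `ε > 0`, `{n : ‖n³α‖ < ε} ∈ p₂`. -/
theorem plim_cubic_along_second_difference_ultrafilter
    (p p₁ p₂ : Ultrafilter ℕ) (hp : ∀ n : ℕ, ({n} : Set ℕ) ∉ p)
    (hp₁ : ∀ A : Set ℕ, A ∈ p₁ ↔ {n : ℕ | (fun a => n + a) '' A ∈ p} ∈ p)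
    (hp₂ : ∀ A : Set ℕ, A ∈ p₂ ↔ {n : ℕ | (fun a => n + a) '' A ∈ p₁} ∈ p₁)
    (α : ℝ) :
    ∀ ε : ℝ, 0 < ε → {n : ℕ | ∃ m : ℤ, |(n : ℝ) ^ 3 * α - (m : ℝ)| < ε} ∈ p₂ := by
  -- p₁ is nonprincipal
  have hp1' : ∀ n : ℕ, ({n} : Set ℕ) ∉ p₁ := by
    intro n h
    rw [hp₁] at h
    have he : {m : ℕ | (fun a => m + a) '' ({n} : Set ℕ) ∈ p} = ∅ := by
      apply Set.eq_empty_iff_forall_notMem.2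
      intro m hm
      simp only [Set.image_singleton, Set.mem_setOf_eq] at hm
      exact hp _ hm
    rw [he] at h
    exact Ultrafilter.empty_notMem h
  set φ : ℝ →+ T := QuotientAddGroup.mk' (AddSubgroup.zmultiples (1:ℝ)) with hφ
  set f : ℕ → T := fun n => φ ((n:ℝ)^3 * α) with hf
  set v2 : ℕ → T := fun n => φ ((n:ℝ)^2 * α) with hv2
  set v1 : ℕ → T := fun n => φ ((n:ℝ) * α) with hv1
  -- key algebraic identity
  have key : ∀ n a : ℕ, n ≤ a →
      f (a - n) = f a - (3*(n:ℤ)) • v2 a + (3*(n:ℤ)^2) • v1 a - f n := by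
    intro n a h
    simp only [hf, hv1, hv2, ← map_zsmul, ← map_add, ← map_sub]
    congr 1
    have hc : ((a - n : ℕ) : ℝ) = (a : ℝ) - (n : ℝ) := by push_cast [h]; ring
    rw [hc]
    simp only [zsmul_eq_mul]
    push_cast
    ring
  -- C1 = 0
  have hC1 : UL p₁ v1 = 0 := by
    have : v1 = fun n : ℕ => (n : ℤ) • φ α := by
      funext n
      rw [hv1, ← map_zsmul]
      simp [zsmul_eq_mul]
    rw [this]
    exact UL_zsmul_lin hp hp₁ (φ α)
  set C2 : T := UL p₁ v2 with hC2
  set C3 : T := UL p₁ f with hC3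
  -- inner limit
  have inner : ∀ n : ℕ, UL p₁ (fun a => f (a - n)) = C3 - (3*(n:ℤ)) • C2 - f n := by
    intro n
    refine UL_eq ?_
    have hev : (fun a : ℕ => f (a - n)) =ᶠ[(p₁ : Filter ℕ)]
        (fun a : ℕ => (f a - (3*(n:ℤ)) • v2 a + (3*(n:ℤ)^2) • v1 a) - f n) := by
      filter_upwards [tail_mem hp1' n] with a ha
      rw [key n a ha]
    refine Tendsto.congr' hev.symm ?_
    have h2 : Tendsto (fun a => (3*(n:ℤ)) • v2 a) (p₁ : Filter ℕ) (𝓝 ((3*(n:ℤ)) • C2)) :=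
      ((continuous_zsmul (3*(n:ℤ))).tendsto C2).comp (tendsto_UL p₁ v2)
    have h1 : Tendsto (fun a => (3*(n:ℤ)^2) • v1 a) (p₁ : Filter ℕ) (𝓝 (0 : T)) := by
      have := ((continuous_zsmul (3*(n:ℤ)^2)).tendsto (UL p₁ v1)).comp (tendsto_UL p₁ v1)
      rwa [hC1, smul_zero] at this
    have h := (((tendsto_UL p₁ f).sub h2).add h1).sub
      (tendsto_const_nhds : Tendsto (fun _ : ℕ => f n) (p₁ : Filter ℕ) (𝓝 (f n)))
    simpa using h
  -- outer limit
  have main : UL p₂ f = 0 := by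
    rw [UL_shift hp1' hp₂]
    simp only [inner]
    have hlin : Tendsto (fun n : ℕ => (n : ℤ) • ((3:ℤ) • C2)) (p₁ : Filter ℕ) (𝓝 0) := by
      have := tendsto_UL p₁ (fun n : ℕ => (n : ℤ) • ((3:ℤ) • C2))
      rwa [UL_zsmul_lin hp hp₁ ((3:ℤ) • C2)] at this
    refine UL_eq ?_
    have h := ((tendsto_const_nhds : Tendsto (fun _ : ℕ => C3) (p₁ : Filter ℕ) (𝓝 C3)).sub
      hlin).sub (tendsto_UL p₁ f)
    rw [← hC3] at h
    have hfun : (fun n : ℕ => C3 - (3*(n:ℤ)) • C2 - f n)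
        = fun n : ℕ => C3 - (n : ℤ) • ((3:ℤ) • C2) - f n := by
      funext n
      rw [smul_smul, mul_comm]
    rw [hfun]
    simpa using h
  -- conclude
  intro ε hε
  have hT : Tendsto f (p₂ : Filter ℕ) (𝓝 0) := by
    have := tendsto_UL p₂ f; rwa [main] at this
  have hb : f ⁻¹' (Metric.ball (0 : T) ε) ∈ p₂ := hT (Metric.ball_mem_nhds 0 hε)
  filter_upwards [hb] with n hn
  refine ⟨round ((n:ℝ)^3 * α), ?_⟩
  have hnorm : ‖f n‖ < ε := by
    simpa [mem_ball_zero_iff] using hn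
  have := AddCircle.norm_eq (p := (1:ℝ)) (x := (n:ℝ)^3 * α)
  simp only [hf] at hnorm
  rw [show (φ ((n:ℝ)^3*α) : T) = (((n:ℝ)^3*α : ℝ) : T) from rfl] at hnorm
  rw [this] at hnorm
  simpa using hnorm
end

section
/- For every ℓ ∈ ℕ, every Δ_ℓ set contains a Δ_ℓ set of zero upper Banach density. In particular, for ℓ = 1: every set of the form {n_j − n_i : i < j} for a strictly increasing sequence (n_k) in ℕ contains, for some subsequence (m_k), the difference set {m_j − m_i : i < j}, which has upper Banach density zero. -/
/-- `D_ℓ((n_k))`: all values `∂(n_{k₁},...,n_{k_{2^ℓ}})` over `k₁ < ... < k_{2^ℓ}`. -/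
def Dset (ℓ : ℕ) (n : ℕ → ℤ) : Set ℤ :=
  {z | ∃ k : ℕ → ℕ, StrictMono k ∧ z = del ℓ (fun i => n (k i))}

/-- The upper Banach density `d*(A) = inf_N sup_M |A ∩ (M, M+N]| / N`. -/
noncomputable def upperBanachDensity (A : Set ℕ) : ℝ :=
  ⨅ N : {N : ℕ // 0 < N}, ⨆ M : ℕ, ((A ∩ Set.Ioc M (M + (N : ℕ))).ncard : ℝ) / (N : ℕ)

open Filter

theorem exists_strictMono_forall_apply_eq {α : ℕ → Type*} [∀ t, Finite (α t)]
    (c : ∀ t, ℕ → α t) :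
    ∃ m : ℕ → ℕ, StrictMono m ∧ ∀ t j, t ≤ j → c t (m j) = c t (m t) := by
  set U := hyperfilter ℕ
  choose r hr using fun t => (U.map (c t)).eq_pure_of_finite
  have hU : ∀ s, ∀ᶠ k in (U : Filter ℕ), c s k = r s := fun s =>
    show {r s} ∈ U.map (c s) by simp [hr s]
  have hUle : ∀ t, ∀ᶠ k in (U : Filter ℕ), ∀ s ∈ Set.Iic t, c s k = r s := fun t =>
    (Set.finite_Iic t).eventually_all.2 fun s _ => hU s
  obtain ⟨m, hm, hmr⟩ := extraction_forall_of_frequently fun t =>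
    (hUle t).frequently.filter_mono Nat.hyperfilter_le_atTop
  exact ⟨m, hm, fun t j htj => (hmr j t htj).trans (hmr t t (Set.mem_Iic.2 le_rfl)).symm⟩

theorem Dset_comp_subset (ℓ : ℕ) (N : ℕ → ℤ) {m : ℕ → ℕ} (hm : StrictMono m) :
    Dset ℓ (N ∘ m) ⊆ Dset ℓ N := by
  rintro z ⟨k, hk, rfl⟩
  exact ⟨m ∘ k, hm.comp hk, rfl⟩

theorem intCast_del_congr {q : ℕ} (ℓ : ℕ) {f g : ℕ → ℤ}
    (h : ∀ i < 2 ^ ℓ, (f i : ZMod q) = g i) : (del ℓ f : ZMod q) = del ℓ g := by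
  induction ℓ generalizing f g with
  | zero => exact h 0 (by norm_num)
  | succ ℓ ih =>
    simp only [del, Int.cast_sub]
    rw [ih fun i hi => h (2 ^ ℓ + i) (by rw [pow_succ]; omega),
      ih fun i hi => h i (by rw [pow_succ]; omega)]

theorem exists_finset_card_le_forall_del_mem (ℓ t : ℕ) {q : ℕ} (N : ℕ → ℤ)
    (hN : ∀ j, t ≤ j → (N j : ZMod q) = N t) :
    ∃ R : Finset (ZMod q), R.card ≤ (t + 1) ^ (2 ^ ℓ) ∧
      ∀ k : ℕ → ℕ, (del ℓ (N ∘ k) : ZMod q) ∈ R := by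
  refine ⟨Finset.univ.image fun c : Fin (2 ^ ℓ) → Fin (t + 1) =>
    (del ℓ (fun i => N (if h : i < 2 ^ ℓ then c ⟨i, h⟩ else 0)) : ZMod q), ?_, fun k => ?_⟩
  · exact Finset.card_image_le.trans (by simp)
  · refine Finset.mem_image.2 ⟨fun i => ⟨min (k i) t, by omega⟩, Finset.mem_univ _, ?_⟩
    refine intCast_del_congr ℓ fun i hi => ?_
    simp only [dif_pos hi, Function.comp_apply]
    rcases le_total (k i) t with hkt | hkt
    · rw [min_eq_left hkt]
    · rw [min_eq_right hkt, hN _ hkt]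

theorem ncard_inter_Ioc_le_card_of_natCast_mem {A : Set ℕ} {q : ℕ} {R : Finset (ZMod q)}
    (hA : ∀ a ∈ A, (a : ZMod q) ∈ R) (M : ℕ) : (A ∩ Set.Ioc M (M + q)).ncard ≤ R.card := by
  rw [← Set.ncard_coe_finset]
  refine Set.ncard_le_ncard_of_injOn (fun a : ℕ => (a : ZMod q)) (fun a ha => hA a ha.1) ?_
  rintro a ⟨-, ha⟩ b ⟨-, hb⟩ hab
  refine ((ZMod.natCast_eq_natCast_iff a b q).1 hab).eq_of_abs_lt ?_
  simp only [Set.mem_Ioc] at ha hb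
  rw [abs_lt]
  omega

theorem upperBanachDensity_nonneg (A : Set ℕ) : 0 ≤ upperBanachDensity A :=
  le_ciInf fun _ => Real.iSup_nonneg fun _ => by positivity

theorem upperBanachDensity_le_of_natCast_mem {A : Set ℕ} {q : ℕ} (hq : 0 < q)
    {R : Finset (ZMod q)} (hA : ∀ a ∈ A, (a : ZMod q) ∈ R) :
    upperBanachDensity A ≤ R.card / q := by
  have hbdd : BddBelow (Set.range fun N : {N : ℕ // 0 < N} =>
      ⨆ M : ℕ, ((A ∩ Set.Ioc M (M + (N : ℕ))).ncard : ℝ) / (N : ℕ)) :=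
    ⟨0, by rintro _ ⟨N, rfl⟩; exact Real.iSup_nonneg fun _ => by positivity⟩
  refine (ciInf_le hbdd ⟨q, hq⟩).trans (ciSup_le fun M => ?_)
  gcongr
  exact_mod_cast ncard_inter_Ioc_le_card_of_natCast_mem hA M

theorem Delta_ell_contains_null_Delta_ell_general (ℓ : ℕ) (n : ℕ → ℕ) :
    ∃ m : ℕ → ℕ, StrictMono m ∧
      Dset ℓ (fun i => (n (m i) : ℤ)) ⊆ Dset ℓ (fun i => (n i : ℤ)) ∧
      upperBanachDensity {a : ℕ | (a : ℤ) ∈ Dset ℓ (fun i => (n (m i) : ℤ))} = 0 := by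
  have hQ : ∀ t : ℕ, NeZero ((t + 1) ^ (2 ^ ℓ + 1)) := fun t => ⟨by positivity⟩
  obtain ⟨m, hm, hcong⟩ := exists_strictMono_forall_apply_eq
    fun t k => ((n k : ℤ) : ZMod ((t + 1) ^ (2 ^ ℓ + 1)))
  refine ⟨m, hm, Dset_comp_subset ℓ (fun i => (n i : ℤ)) hm, ?_⟩
  set A := {a : ℕ | (a : ℤ) ∈ Dset ℓ (fun i => (n (m i) : ℤ))}
  have hle : ∀ t : ℕ, upperBanachDensity A ≤ 1 / ((t : ℝ) + 1) := fun t => by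
    obtain ⟨R, hRcard, hR⟩ :=
      exists_finset_card_le_forall_del_mem ℓ t (fun i => (n (m i) : ℤ)) (hcong t)
    calc _ ≤ (R.card : ℝ) / ((t + 1) ^ (2 ^ ℓ + 1) : ℕ) :=
          upperBanachDensity_le_of_natCast_mem (by positivity) fun a ha => by
            obtain ⟨k, -, hk⟩ := ha
            rw [← Int.cast_natCast, hk]
            exact hR k
      _ ≤ ((t : ℝ) + 1) ^ (2 ^ ℓ) / ((t : ℝ) + 1) ^ (2 ^ ℓ + 1) := by
          push_cast; gcongr; exact_mod_cast hRcard
      _ = 1 / ((t : ℝ) + 1) := by field_simp; ring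
  exact le_antisymm (ge_of_tendsto' tendsto_one_div_add_atTop_nhds_zero_nat hle)
    (upperBanachDensity_nonneg A)

/-- Every `Δ_ℓ` set contains a `Δ_ℓ` set of zero upper Banach density: the `ℓ`-th
difference set of any strictly increasing sequence contains, for some subsequence, an
`ℓ`-th difference set of upper Banach density zero. -/
theorem Delta_ell_contains_null_Delta_ell (ℓ : ℕ) (hℓ : 1 ≤ ℓ) (n : ℕ → ℕ)
    (hmono : StrictMono n) :
    ∃ m : ℕ → ℕ, StrictMono m ∧
      Dset ℓ (fun i => (n (m i) : ℤ)) ⊆ Dset ℓ (fun i => (n i : ℤ)) ∧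
      upperBanachDensity {a : ℕ | (a : ℤ) ∈ Dset ℓ (fun i => (n (m i) : ℤ))} = 0 :=
  Delta_ell_contains_null_Delta_ell_general ℓ n
end

section
/- Let E = ⋃_{k∈ℕ} E_k where E_k = {(2k)!·1, (2k)!·2, ..., (2k)!·k}. Then E is not a Δ set: there is no strictly increasing sequence (n_k)_{k∈ℕ} in ℕ with {n_j − n_i : i < j} ⊆ E. -/
/-- `E = ⋃_k {(2k)!·1, ..., (2k)!·k}`. -/
def Eset : Set ℕ := {x | ∃ k j : ℕ, 1 ≤ j ∧ j ≤ k ∧ x = (2 * k).factorial * j}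

/-- `E` is not a `Δ` set: no strictly increasing sequence has all its differences in `E`. -/
theorem Eset_not_Delta :
    ¬ ∃ n : ℕ → ℕ, StrictMono n ∧ ∀ i j : ℕ, i < j → n j - n i ∈ Eset := by
  rintro ⟨n, hmono, hdiff⟩
  set d := n 1 - n 0 with hd
  have h01 : n 0 < n 1 := hmono one_pos
  have hd0 : 0 < d := Nat.sub_pos_of_lt h01
  set L := (2 * (d + 2)).factorial * (d + 2) + d + 1 with hLdef
  set l := n 0 + L + 2 with hldef
  have hl1 : 1 < l := by omega
  have hnl : l ≤ n l := hmono.le_apply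
  have h1l : n 1 < n l := hmono (by omega)
  have h0l : n 0 < n l := lt_trans h01 h1l
  obtain ⟨k, j, hj1, hjk, hx⟩ := hdiff 0 l (by omega)
  obtain ⟨m, i, hi1, him, hy⟩ := hdiff 1 l hl1
  -- x = y + d
  have hxy : n l - n 0 = (n l - n 1) + d := by omega
  have hxL : L ≤ n l - n 0 := by omega
  -- k is large
  have hkk : n l - n 0 ≤ (2 * k).factorial * k := by
    rw [hx]; exact Nat.mul_le_mul_left _ hjk
  have hk : d + 3 ≤ k := by
    by_contra h
    push_neg at h
    have h1 : (2 * k).factorial ≤ (2 * (d + 2)).factorial :=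
      Nat.factorial_le (by omega)
    have h2 : (2 * k).factorial * k ≤ (2 * (d + 2)).factorial * (d + 2) :=
      Nat.mul_le_mul h1 (by omega)
    omega
  -- m is large
  have hmm : n l - n 1 ≤ (2 * m).factorial * m := by
    rw [hy]; exact Nat.mul_le_mul_left _ him
  have hyL : (2 * (d + 2)).factorial * (d + 2) + 1 ≤ n l - n 1 := by omega
  have hm : d + 3 ≤ m := by
    by_contra h
    push_neg at h
    have h1 : (2 * m).factorial ≤ (2 * (d + 2)).factorial :=
      Nat.factorial_le (by omega)
    have h2 : (2 * m).factorial * m ≤ (2 * (d + 2)).factorial * (d + 2) :=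
      Nat.mul_le_mul h1 (by omega)
    omega
  rcases lt_trichotomy k m with hkm | hkm | hkm
  · -- k < m : x < (2k+1)! ≤ (2m)! ≤ y, contradiction with x = y + d
    have h1 : (2 * k).factorial * j ≤ (2 * k).factorial * (2 * k) :=
      Nat.mul_le_mul_left _ (by omega)
    have h2 : (2 * k).factorial * (2 * k) < (2 * k + 1).factorial := by
      rw [Nat.factorial_succ]
      have hpos : 0 < (2 * k).factorial := (2 * k).factorial_pos
      nlinarith
    have h3 : (2 * k + 1).factorial ≤ (2 * m).factorial :=
      Nat.factorial_le (by omega)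
    have h4 : (2 * m).factorial ≤ (2 * m).factorial * i :=
      Nat.le_mul_of_pos_right _ (by omega)
    omega
  · -- k = m : d is a positive multiple of (2k)!, so d ≥ (2k)! ≥ 2k > d
    subst hkm
    have heq : (2 * k).factorial * j = (2 * k).factorial * i +
        (2 * k).factorial * (j - i) := by
      rw [← Nat.mul_add]
      congr 1
      -- j ≥ i since x > y
      have hji : i ≤ j := by
        by_contra h
        push_neg at h
        have : (2 * k).factorial * j ≤ (2 * k).factorial * i :=
          Nat.mul_le_mul_left _ (by omega)
        omega
      omega
    have hji : i < j := by
      by_contra h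
      push_neg at h
      have : (2 * k).factorial * j ≤ (2 * k).factorial * i :=
        Nat.mul_le_mul_left _ h
      omega
    have hfk : 2 * k ≤ (2 * k).factorial := Nat.self_le_factorial _
    have h1 : (2 * k).factorial ≤ (2 * k).factorial * (j - i) :=
      Nat.le_mul_of_pos_right _ (by omega)
    omega
  · -- m < k : y < (2m+1)! ≤ (2k-1)!, while x ≥ (2k)! = 2k·(2k-1)!
    have h1 : (2 * m).factorial * i ≤ (2 * m).factorial * (2 * m) :=
      Nat.mul_le_mul_left _ (by omega)
    have h2 : (2 * m).factorial * (2 * m) < (2 * m + 1).factorial := by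
      rw [Nat.factorial_succ]
      have hpos : 0 < (2 * m).factorial := (2 * m).factorial_pos
      nlinarith
    have h3 : (2 * m + 1).factorial ≤ (2 * k - 1).factorial :=
      Nat.factorial_le (by omega)
    have h4 : (2 * k).factorial = 2 * k * (2 * k - 1).factorial := by
      have h2k : 2 * k = (2 * k - 1) + 1 := by omega
      conv_lhs => rw [h2k]
      rw [Nat.factorial_succ, ← h2k]
    have h5 : (2 * k).factorial ≤ (2 * k).factorial * j :=
      Nat.le_mul_of_pos_right _ (by omega)
    have hpos : 0 < (2 * k - 1).factorial := Nat.factorial_pos _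
    have h6 : (2 * k - 1) * (2 * k - 1).factorial + (2 * k - 1).factorial =
        2 * k * (2 * k - 1).factorial := by
      rw [← Nat.succ_mul]
      congr 1
      omega
    have h7 : 2 * k - 1 ≤ (2 * k - 1) * (2 * k - 1).factorial :=
      Nat.le_mul_of_pos_right _ hpos
    omega
end

section
/- For each ℓ ∈ ℕ and each k with 1 ≤ k ≤ ℓ, define E_k = {(2k)!·1, ..., (2k)!·k} and E = ⋃_{k∈ℕ} E_k. Then for every r ≥ 2^ℓ there exists R with E_R a Δ_{ℓ,r} set; consequently E is a Δ_{ℓ,0} set for every ℓ ∈ ℕ (it contains a set D_ℓ((n_k)_{k=1}^r) for every r ≥ 2^ℓ). -/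
lemma del_const_mul (c : ℤ) : ∀ (ℓ : ℕ) (f : ℕ → ℤ), del ℓ (fun i => c * f i) = c * del ℓ f
  | 0, _ => rfl
  | ℓ + 1, f => by
    simp only [del, del_const_mul c ℓ, mul_sub]

lemma abs_del_le : ∀ (ℓ : ℕ) (f : ℕ → ℤ), |del ℓ f| ≤ ∑ i ∈ Finset.range (2 ^ ℓ), |f i|
  | 0, f => by simp [del]
  | ℓ + 1, f => by
    rw [pow_succ, mul_two, Finset.sum_range_add, add_comm (∑ i ∈ Finset.range (2 ^ ℓ), |f i|)]
    exact (abs_sub _ _).trans (add_le_add (abs_del_le ℓ _) (abs_del_le ℓ f))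

lemma abs_del_sub_last_le : ∀ (ℓ : ℕ) (f : ℕ → ℤ),
    |del ℓ f - f (2 ^ ℓ - 1)| ≤ ∑ i ∈ Finset.range (2 ^ ℓ - 1), |f i|
  | 0, f => by simp [del]
  | ℓ + 1, f => by
    have hlast : 2 ^ (ℓ + 1) - 1 = 2 ^ ℓ + (2 ^ ℓ - 1) := by
      have := Nat.one_le_two_pow (n := ℓ)
      rw [pow_succ]; omega
    rw [del, hlast, Finset.sum_range_add, add_comm (∑ i ∈ Finset.range (2 ^ ℓ), |f i|)]
    calc |del ℓ (fun i => f (2 ^ ℓ + i)) - del ℓ f - f (2 ^ ℓ + (2 ^ ℓ - 1))|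
        = |(del ℓ (fun i => f (2 ^ ℓ + i)) - f (2 ^ ℓ + (2 ^ ℓ - 1))) - del ℓ f| := by ring_nf
      _ ≤ |del ℓ (fun i => f (2 ^ ℓ + i)) - f (2 ^ ℓ + (2 ^ ℓ - 1))| + |del ℓ f| := abs_sub _ _
      _ ≤ _ := add_le_add (abs_del_sub_last_le ℓ _) (abs_del_le ℓ f)

lemma two_mul_sum_pow_lt {b : ℤ} (hb : 3 ≤ b) {j : ℕ → ℕ} (hj : StrictMono j) :
    ∀ k : ℕ, 2 * ∑ i ∈ Finset.range k, b ^ j i < b ^ j k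
  | 0 => by simp only [Finset.range_zero, Finset.sum_empty, mul_zero]; positivity
  | k + 1 => by
    have hstep : b ^ j k * b ≤ b ^ j (k + 1) := by
      rw [← pow_succ]; exact pow_le_pow_right₀ (by omega) (hj k.lt_succ_self)
    have hpos : 0 < b ^ j k := by positivity
    rw [Finset.sum_range_succ]
    nlinarith [two_mul_sum_pow_lt hb hj k]

lemma del_pow_mem_Icc {b : ℤ} (hb : 3 ≤ b) (ℓ : ℕ) {j : ℕ → ℕ} (hj : StrictMono j) :
    del ℓ (fun i => b ^ j i) ∈ Set.Icc 1 (b ^ (j (2 ^ ℓ - 1) + 1)) := by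
  have hclose := abs_le.mp (abs_del_sub_last_le ℓ (fun i => b ^ j i))
  have hsmall := two_mul_sum_pow_lt hb hj (2 ^ ℓ - 1)
  simp only [abs_pow, abs_of_nonneg (by omega : (0 : ℤ) ≤ b)] at hclose
  have hpos : 0 < b ^ j (2 ^ ℓ - 1) := by positivity
  rw [pow_succ]
  constructor <;> nlinarith [hclose.1, hclose.2]

theorem Eset_is_Delta_ell_zero_general (ℓ : ℕ) (r : ℕ) :
    ∃ R : ℕ, ∃ n : ℕ → ℤ, ∀ j : ℕ → ℕ, StrictMono j → j (2 ^ ℓ - 1) < r →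
      ∃ m : ℕ, 1 ≤ m ∧ m ≤ R ∧
        del ℓ (fun i => n (j i)) = (((2 * R).factorial * m : ℕ) : ℤ) := by
  refine ⟨3 ^ r, fun k => ((2 * 3 ^ r).factorial : ℤ) * 3 ^ k, fun j hj hjr => ?_⟩
  obtain ⟨hpos, hle⟩ := del_pow_mem_Icc le_rfl ℓ hj
  obtain ⟨m, hm⟩ := Int.eq_ofNat_of_zero_le (zero_le_one.trans hpos)
  have hR : (3 : ℤ) ^ (j (2 ^ ℓ - 1) + 1) ≤ 3 ^ r := pow_le_pow_right₀ (by norm_num) hjr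
  rw [hm] at hpos hle
  refine ⟨m, by exact_mod_cast hpos, by exact_mod_cast hle.trans hR, ?_⟩
  rw [del_const_mul, hm]
  push_cast
  rfl

/-- With `E_k = {(2k)!·1, ..., (2k)!·k}` and `E = ⋃_k E_k`: for every `ℓ ≥ 1` and every
`r ≥ 2^ℓ` there are `R` and an `r`-element integer sequence whose `ℓ`-th difference set
lies in `E_R`; consequently `E` is a `Δ_{ℓ,0}` set for every `ℓ`. -/
theorem Eset_is_Delta_ell_zero (ℓ : ℕ) (hℓ : 1 ≤ ℓ) (r : ℕ) (hr : 2 ^ ℓ ≤ r) :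
    ∃ R : ℕ, ∃ n : ℕ → ℤ, ∀ j : ℕ → ℕ, StrictMono j → j (2 ^ ℓ - 1) < r →
      ∃ m : ℕ, 1 ≤ m ∧ m ≤ R ∧
        del ℓ (fun i => n (j i)) = (((2 * R).factorial * m : ℕ) : ℤ) :=
  Eset_is_Delta_ell_zero_general ℓ r
end

section
/- Let ℓ ∈ ℕ, let D ⊆ ℕ have positive upper Banach density d*(D) = δ > 0, let M ≥ 2^ℓ, let n₁,...,n_M ∈ ℕ, and let E ⊆ ℕ satisfy d*(E) = 0. Then there exists n ∈ D such that for all 1 ≤ j₁ < ... < j_{2^ℓ−1} ≤ M, ∂(n_{j₁},...,n_{j_{2^ℓ−1}}, n) ∉ E. -/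
/-!
If no `n₀ ∈ D` works, then every `n₀ ∈ D` satisfies `e = n₀ + c` for some `e ∈ E`, where
`c = ∂(n_{j₁}, …, n_{j_{2^ℓ-1}}, 0)`, because `∂` is affine in its last coordinate with slope `1`.
The constants `c` range over a finite set, so `D` is covered by finitely many translates of `E`.
Upper Banach density is monotone, subadditive and does not increase under translation, so
`d*(D) ≤ 0`, contradicting `d*(D) = δ > 0`.
-/

lemma del_congr {ℓ : ℕ} {f g : ℕ → ℤ} (h : ∀ i < 2 ^ ℓ, f i = g i) : del ℓ f = del ℓ g := by
  induction ℓ generalizing f g with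
  | zero => exact h 0 Nat.one_pos
  | succ ℓ ih =>
    have hpow : 2 ^ (ℓ + 1) = 2 ^ ℓ + 2 ^ ℓ := by rw [pow_succ]; ring
    rw [del, del, ih fun i hi => h _ (by omega), ih fun i hi => h i (by omega)]

lemma del_eq_last_add (ℓ : ℕ) (f : ℕ → ℤ) :
    del ℓ f = f (2 ^ ℓ - 1) + del ℓ (fun i => if i < 2 ^ ℓ - 1 then f i else 0) := by
  induction ℓ generalizing f with
  | zero => simp [del]
  | succ ℓ ih =>
    have hpos := Nat.one_le_two_pow (n := ℓ)
    have hpow : 2 ^ (ℓ + 1) = 2 ^ ℓ + 2 ^ ℓ := by rw [pow_succ]; ring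
    set g : ℕ → ℤ := fun i => if i < 2 ^ (ℓ + 1) - 1 then f i else 0
    have h_low : del ℓ g = del ℓ f := del_congr fun i hi => if_pos (by omega)
    have h_shift : del ℓ (fun i => g (2 ^ ℓ + i)) =
        del ℓ (fun i => if i < 2 ^ ℓ - 1 then f (2 ^ ℓ + i) else 0) := by
      have h_last : g (2 ^ ℓ + (2 ^ ℓ - 1)) = 0 := if_neg (by omega)
      rw [ih (fun i => g (2 ^ ℓ + i)), h_last, zero_add]
      refine del_congr fun i _ => ?_
      by_cases hi : i < 2 ^ ℓ - 1
      · simp only [g, hi, if_true, show 2 ^ ℓ + i < 2 ^ (ℓ + 1) - 1 by omega]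
      · simp only [hi, if_false]
    have h_last : f (2 ^ ℓ + (2 ^ ℓ - 1)) = f (2 ^ (ℓ + 1) - 1) := by
      congr 1; omega
    rw [del, del, h_low, h_shift, ih (fun i => f (2 ^ ℓ + i)), h_last]
    ring

section Density

noncomputable def maxWindowDensity (A : Set ℕ) (N : ℕ) : ℝ :=
  ⨆ M : ℕ, ((A ∩ Set.Ioc M (M + N)).ncard : ℝ) / N

variable {A B : Set ℕ} {N : ℕ}

lemma ncard_inter_Ioc_le (A : Set ℕ) (M N : ℕ) : (A ∩ Set.Ioc M (M + N)).ncard ≤ N := by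
  simpa using Set.ncard_le_ncard Set.inter_subset_right (Set.finite_Ioc M (M + N))

lemma le_maxWindowDensity (A : Set ℕ) (M N : ℕ) :
    ((A ∩ Set.Ioc M (M + N)).ncard : ℝ) / N ≤ maxWindowDensity A N := by
  refine le_ciSup (f := fun M => ((A ∩ Set.Ioc M (M + N)).ncard : ℝ) / N) ⟨1, ?_⟩ M
  rintro _ ⟨M', rfl⟩
  exact div_le_one_of_le₀ (by exact_mod_cast ncard_inter_Ioc_le A M' N) N.cast_nonneg

lemma maxWindowDensity_nonneg (A : Set ℕ) (N : ℕ) : 0 ≤ maxWindowDensity A N :=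
  (div_nonneg (Nat.cast_nonneg _) (Nat.cast_nonneg _)).trans (le_maxWindowDensity A 0 N)

lemma ncard_inter_Ioc_le_mul_maxWindowDensity (A : Set ℕ) (M N : ℕ) :
    ((A ∩ Set.Ioc M (M + N)).ncard : ℝ) ≤ N * maxWindowDensity A N := by
  rcases N.eq_zero_or_pos with rfl | hN
  · simp
  · rw [← div_le_iff₀' (by positivity)]
    exact le_maxWindowDensity A M N

lemma ncard_inter_Ioc_union_le (A : Set ℕ) (M N K : ℕ) :
    (A ∩ Set.Ioc M (M + (N + K))).ncard ≤
      (A ∩ Set.Ioc M (M + N)).ncard + (A ∩ Set.Ioc (M + N) (M + N + K)).ncard := by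
  rw [← add_assoc, ← Set.Ioc_union_Ioc_eq_Ioc (b := M + N) (by omega) (by omega), Set.inter_union_distrib_left]
  exact Set.ncard_union_le _ _

lemma maxWindowDensity_mul_le (A : Set ℕ) (N : ℕ) {t : ℕ} (ht : 0 < t) :
    maxWindowDensity A (t * N) ≤ maxWindowDensity A N := by
  have hcount : ∀ t M, ((A ∩ Set.Ioc M (M + t * N)).ncard : ℝ) ≤ t * N * maxWindowDensity A N := by
    intro t
    induction t with
    | zero => simp
    | succ t ih =>
      intro M
      have hsplit := ncard_inter_Ioc_union_le A M (t * N) N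
      rw [← add_one_mul] at hsplit
      have := ncard_inter_Ioc_le_mul_maxWindowDensity A (M + t * N) N
      have hsplit' := (Nat.cast_le (α := ℝ)).2 hsplit
      push_cast at hsplit' ⊢
      linarith [ih M]
  refine ciSup_le fun M => ?_
  rcases N.eq_zero_or_pos with rfl | hN
  · simpa using maxWindowDensity_nonneg A 0
  · rw [div_le_iff₀ (by positivity)]
    have := hcount t M
    push_cast at this ⊢
    linarith

lemma upperBanachDensity_le_maxWindowDensity (A : Set ℕ) (hN : 0 < N) :
    upperBanachDensity A ≤ maxWindowDensity A N :=
  ciInf_le ⟨0, by rintro _ ⟨N', rfl⟩; exact maxWindowDensity_nonneg A N'⟩ (⟨N, hN⟩ : {N // 0 < N})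

lemma exists_forall_maxWindowDensity_mul_lt {c : ℝ} (h : upperBanachDensity A < c) :
    ∃ N > 0, ∀ t > 0, maxWindowDensity A (t * N) < c := by
  obtain ⟨⟨N, hN⟩, hlt⟩ := exists_lt_of_ciInf_lt h
  exact ⟨N, hN, fun t ht => (maxWindowDensity_mul_le A N ht).trans_lt hlt⟩

lemma upperBanachDensity_mono (h : A ⊆ B) : upperBanachDensity A ≤ upperBanachDensity B := by
  refine le_ciInf fun N => (upperBanachDensity_le_maxWindowDensity A N.2).trans ?_
  refine ciSup_le fun M => (div_le_div_of_nonneg_right ?_ N.1.cast_nonneg).trans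
    (le_maxWindowDensity B M N)
  exact_mod_cast Set.ncard_le_ncard (Set.inter_subset_inter_left _ h) (Set.finite_Ioc _ _ |>.subset
    Set.inter_subset_right)

lemma maxWindowDensity_union_le (A B : Set ℕ) (N : ℕ) :
    maxWindowDensity (A ∪ B) N ≤ maxWindowDensity A N + maxWindowDensity B N := by
  refine ciSup_le fun M => ?_
  have hunion : ((A ∪ B) ∩ Set.Ioc M (M + N)).ncard ≤
      (A ∩ Set.Ioc M (M + N)).ncard + (B ∩ Set.Ioc M (M + N)).ncard := by
    rw [Set.union_inter_distrib_right]
    exact Set.ncard_union_le _ _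
  calc ((((A ∪ B) ∩ Set.Ioc M (M + N)).ncard : ℕ) : ℝ) / N
      ≤ ((A ∩ Set.Ioc M (M + N)).ncard : ℝ) / N + ((B ∩ Set.Ioc M (M + N)).ncard : ℝ) / N := by
        rw [← add_div]
        exact div_le_div_of_nonneg_right (by exact_mod_cast hunion) N.cast_nonneg
    _ ≤ _ := add_le_add (le_maxWindowDensity A M N) (le_maxWindowDensity B M N)

lemma upperBanachDensity_union_le (A B : Set ℕ) :
    upperBanachDensity (A ∪ B) ≤ upperBanachDensity A + upperBanachDensity B := by
  refine le_of_forall_pos_lt_add fun ε hε => ?_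
  obtain ⟨N₁, hN₁, hA⟩ := exists_forall_maxWindowDensity_mul_lt
    (lt_add_of_pos_right (upperBanachDensity A) (half_pos hε))
  obtain ⟨N₂, hN₂, hB⟩ := exists_forall_maxWindowDensity_mul_lt
    (lt_add_of_pos_right (upperBanachDensity B) (half_pos hε))
  calc upperBanachDensity (A ∪ B)
      ≤ maxWindowDensity (A ∪ B) (N₂ * N₁) :=
        upperBanachDensity_le_maxWindowDensity _ (Nat.mul_pos hN₂ hN₁)
    _ ≤ maxWindowDensity A (N₂ * N₁) + maxWindowDensity B (N₁ * N₂) := by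
        rw [mul_comm N₁]; exact maxWindowDensity_union_le A B _
    _ < upperBanachDensity A + upperBanachDensity B + ε := by
        linarith [hA N₂ hN₂, hB N₁ hN₁]

lemma upperBanachDensity_biUnion_le {ι : Type*} (S : Finset ι) (A : ι → Set ℕ) :
    upperBanachDensity (⋃ i ∈ S, A i) ≤ ∑ i ∈ S, upperBanachDensity (A i) := by
  classical
  induction S using Finset.induction_on with
  | empty =>
    simpa using (upperBanachDensity_le_maxWindowDensity (∅ : Set ℕ) Nat.one_pos).trans_eq
      (by simp [maxWindowDensity])
  | insert i S hi ih =>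
    rw [Finset.set_biUnion_insert, Finset.sum_insert hi]
    exact (upperBanachDensity_union_le _ _).trans (add_le_add le_rfl ih)

/-- The values `m + c` lie in the window `[a, a + N]` with `a = max (M + c) 0`, whose left
endpoint is only needed when `M + c < 0`. -/
lemma ncard_translate_inter_Ioc_le (E : Set ℕ) (c : ℤ) (M N : ℕ) :
    ({m : ℕ | ∃ e ∈ E, (e : ℤ) = m + c} ∩ Set.Ioc M (M + N)).ncard ≤
      (E ∩ Set.Ioc (M + c).toNat ((M + c).toNat + N)).ncard + 1 := by
  set a := ((M : ℤ) + c).toNat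
  calc ({m : ℕ | ∃ e ∈ E, (e : ℤ) = m + c} ∩ Set.Ioc M (M + N)).ncard
      ≤ (insert a (E ∩ Set.Ioc a (a + N))).ncard := by
        refine Set.ncard_le_ncard_of_injOn (fun m : ℕ => ((m : ℤ) + c).toNat) ?_ ?_
          (((Set.finite_Ioc a (a + N)).subset Set.inter_subset_right).insert a)
        · rintro m ⟨⟨e, he, hem⟩, hm₁, hm₂⟩
          have he' : ((m : ℤ) + c).toNat = e := by omega
          rw [he']
          by_cases hea : e = a
          · exact Or.inl hea
          · exact Or.inr ⟨he, by omega, by omega⟩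
        · rintro m ⟨⟨e, -, hem⟩, -⟩ m' ⟨⟨e', -, hem'⟩, -⟩ h
          simp only at h
          omega
    _ ≤ _ := Set.ncard_insert_le _ _

lemma maxWindowDensity_translate_le (E : Set ℕ) (c : ℤ) (N : ℕ) :
    maxWindowDensity {m : ℕ | ∃ e ∈ E, (e : ℤ) = m + c} N ≤ maxWindowDensity E N + 1 / N := by
  refine ciSup_le fun M => ?_
  calc (({m : ℕ | ∃ e ∈ E, (e : ℤ) = m + c} ∩ Set.Ioc M (M + N)).ncard : ℝ) / N
      ≤ ((E ∩ Set.Ioc (M + c).toNat ((M + c).toNat + N)).ncard + 1 : ℝ) / N :=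
        div_le_div_of_nonneg_right (by exact_mod_cast ncard_translate_inter_Ioc_le E c M N)
          N.cast_nonneg
    _ ≤ maxWindowDensity E N + 1 / N := by
        rw [add_div]
        exact add_le_add (le_maxWindowDensity E _ N) le_rfl

lemma upperBanachDensity_translate_le (E : Set ℕ) (c : ℤ) :
    upperBanachDensity {m : ℕ | ∃ e ∈ E, (e : ℤ) = m + c} ≤ upperBanachDensity E := by
  refine le_of_forall_pos_lt_add fun ε hε => ?_
  obtain ⟨N, hN, hE⟩ := exists_forall_maxWindowDensity_mul_lt
    (lt_add_of_pos_right (upperBanachDensity E) (half_pos hε))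
  obtain ⟨t, ht⟩ := exists_nat_one_div_lt (half_pos hε)
  have htN : (1 : ℝ) / ((t + 1) * N : ℕ) ≤ 1 / (t + 1) := by
    gcongr
    push_cast
    exact le_mul_of_one_le_right (by positivity) (by exact_mod_cast hN)
  calc upperBanachDensity {m : ℕ | ∃ e ∈ E, (e : ℤ) = m + c}
      ≤ maxWindowDensity {m : ℕ | ∃ e ∈ E, (e : ℤ) = m + c} ((t + 1) * N) :=
        upperBanachDensity_le_maxWindowDensity _ (Nat.mul_pos t.succ_pos hN)
    _ ≤ maxWindowDensity E ((t + 1) * N) + 1 / ((t + 1) * N : ℕ) :=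
        maxWindowDensity_translate_le E c _
    _ < upperBanachDensity E + ε := by linarith [hE (t + 1) t.succ_pos]

end Density

theorem avoid_null_set_in_last_coordinate_general (ℓ : ℕ) (D E : Set ℕ) (δ : ℝ)
    (hδ : 0 < δ) (hD : upperBanachDensity D = δ) (hE : upperBanachDensity E = 0)
    (M : ℕ) (n : ℕ → ℕ) :
    ∃ n₀ ∈ D, ∀ j : ℕ → ℕ, StrictMono j → (∀ i, i < 2 ^ ℓ - 1 → j i < M) →
      ∀ e ∈ E, (e : ℤ) ≠
        del ℓ (fun i => if i < 2 ^ ℓ - 1 then (n (j i) : ℤ) else (n₀ : ℤ)) := by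
  by_contra! hcon
  let S : Finset ℤ := Finset.univ.image fun v : Fin (2 ^ ℓ - 1) → Fin M =>
    del ℓ fun i => if h : i < 2 ^ ℓ - 1 then (n (v ⟨i, h⟩) : ℤ) else 0
  have hcover : D ⊆ ⋃ c ∈ S, {m : ℕ | ∃ e ∈ E, (e : ℤ) = m + c} := by
    intro n₀ hn₀
    obtain ⟨j, -, hjM, e, he, hdel⟩ := hcon n₀ hn₀
    rw [del_eq_last_add] at hdel
    refine Set.mem_biUnion (Finset.mem_image.2 ⟨fun i => ⟨j i, hjM i i.2⟩, Finset.mem_univ _, rfl⟩)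
      ⟨e, he, ?_⟩
    simpa +contextual [dite_eq_ite] using hdel
  have hD_le : upperBanachDensity D ≤ 0 := calc
    upperBanachDensity D ≤ ∑ c ∈ S, upperBanachDensity {m : ℕ | ∃ e ∈ E, (e : ℤ) = m + c} :=
      (upperBanachDensity_mono hcover).trans (upperBanachDensity_biUnion_le S _)
    _ ≤ ∑ c ∈ S, upperBanachDensity E :=
      Finset.sum_le_sum fun c _ => upperBanachDensity_translate_le E c
    _ = 0 := by simp [hE]
  linarith

/-- If `d*(D) = δ > 0`, `d*(E) = 0`, `M ≥ 2^ℓ` and `n₀, ..., n_{M-1} ∈ ℕ`, then there is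
`n ∈ D` such that for all choices of indices `j₁ < ... < j_{2^ℓ-1}` below `M`,
`∂(n_{j₁},...,n_{j_{2^ℓ-1}}, n) ∉ E`. -/
theorem avoid_null_set_in_last_coordinate (ℓ : ℕ) (hℓ : 1 ≤ ℓ) (D E : Set ℕ) (δ : ℝ)
    (hδ : 0 < δ) (hD : upperBanachDensity D = δ) (hE : upperBanachDensity E = 0)
    (M : ℕ) (hM : 2 ^ ℓ ≤ M) (n : ℕ → ℕ) :
    ∃ n₀ ∈ D, ∀ j : ℕ → ℕ, StrictMono j → (∀ i, i < 2 ^ ℓ - 1 → j i < M) →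
      ∀ e ∈ E, (e : ℤ) ≠
        del ℓ (fun i => if i < 2 ^ ℓ - 1 then (n (j i) : ℤ) else (n₀ : ℤ)) :=
  avoid_null_set_in_last_coordinate_general ℓ D E δ hδ hD hE M n
end
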